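/- arXiv:1812.10112 — 4 statements merged into one kernel-verified Lean document; each statement's English description precedes it below -/
import Mathlib

section
/- Let m ≥ 2 be an integer and let a_1 > a_2 > ⋯ > a_m be real numbers. Suppose b_1, …, b_{m-1} are real numbers satisfying a_j ≥ b_j ≥ a_{j+1} for all 1 ≤ j ≤ m-1. Then there exists an integer k with 1 ≤ k ≤ m-1 and a real number b'_k with a_k ≥ b'_k ≥ a_{k+1} such that, setting b'_j := a_j for 1 ≤ j < k and b'_j := a_{j+1} for k < j ≤ m-1, one has ∑_{j=1}^{m-1} b_j = ∑_{j=1}^{m-1} b'_j. Moreover the resulting tuple (b'_1, …, b'_{m-1}) is unique: if (c_1,…,c_{m-1}) also has this form for some index k' (i.e. c_j = a_j for j < k', c_j = a_{j+1} for j > k', a_{k'} ≥ c_{k'} ≥ a_{k'+1}) and ∑_{j=1}^{m-1} c_j = ∑_{j=1}^{m-1} b_j, then (c_1,…,c_{m-1}) = (b'_1,…,b'_{m-1}). -/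
/-- Lemma on redistributing the sum of interlacing numbers. -/
theorem stmt_0 (m : ℕ) (hm : 2 ≤ m) (a b : ℕ → ℝ)
    (ha : ∀ j, 1 ≤ j → j < m → a (j + 1) < a j)
    (hb : ∀ j, 1 ≤ j → j ≤ m - 1 → a (j + 1) ≤ b j ∧ b j ≤ a j) :
    ∃ k bk, 1 ≤ k ∧ k ≤ m - 1 ∧ a (k + 1) ≤ bk ∧ bk ≤ a k ∧
      ((∑ j ∈ Finset.Icc 1 (m - 1), b j) =
        ∑ j ∈ Finset.Icc 1 (m - 1), (if j < k then a j else if j = k then bk else a (j + 1))) ∧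
      (∀ k' ck, 1 ≤ k' → k' ≤ m - 1 → a (k' + 1) ≤ ck → ck ≤ a k' →
        ((∑ j ∈ Finset.Icc 1 (m - 1), b j) =
          ∑ j ∈ Finset.Icc 1 (m - 1), (if j < k' then a j else if j = k' then ck else a (j + 1))) →
        ∀ j, 1 ≤ j → j ≤ m - 1 →
          (if j < k' then a j else if j = k' then ck else a (j + 1)) =
          (if j < k then a j else if j = k then bk else a (j + 1))) := by
  set N := m - 1 with hNdef
  have hN1 : 1 ≤ N := by omega
  set S : ℕ → ℝ := fun k => ∑ j ∈ Finset.Icc 1 N, (if j < k then a j else a (j + 1)) with hS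
  -- value of staircase sum
  have hval : ∀ (k : ℕ) (x : ℝ), 1 ≤ k → k ≤ N →
      (∑ j ∈ Finset.Icc 1 N, (if j < k then a j else if j = k then x else a (j + 1)))
        = S k + (x - a (k + 1)) := by
    intro k x hk1 hk2
    have h1 : (∑ j ∈ Finset.Icc 1 N, ((if j < k then a j else if j = k then x else a (j + 1))
        - (if j < k then a j else a (j + 1))))
        = ∑ j ∈ Finset.Icc 1 N, (if j = k then x - a (k + 1) else 0) := by
      apply Finset.sum_congr rfl
      intro j _
      rcases lt_trichotomy j k with h | h | h
      · have h2 : j ≠ k := by omega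
        simp [h, h2]
      · subst h
        simp
      · have h2 : ¬ j < k := by omega
        have h3 : j ≠ k := by omega
        simp [h2, h3]
    rw [Finset.sum_sub_distrib] at h1
    rw [Finset.sum_ite_eq' (Finset.Icc 1 N) k (fun _ => x - a (k + 1))] at h1
    rw [if_pos (by simp [Finset.mem_Icc]; omega)] at h1
    have : S k = ∑ j ∈ Finset.Icc 1 N, (if j < k then a j else a (j + 1)) := rfl
    linarith [this]
  have hstep : ∀ k, 1 ≤ k → k ≤ N → S (k + 1) = S k + (a k - a (k + 1)) := by
    intro k hk1 hk2
    have : S (k + 1) = ∑ j ∈ Finset.Icc 1 N,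
        (if j < k then a j else if j = k then a k else a (j + 1)) := by
      apply Finset.sum_congr rfl
      intro j _
      rcases lt_trichotomy j k with h | h | h
      · have h1 : j < k + 1 := by omega
        simp [h, h1]
      · subst h
        simp
      · have h1 : ¬ j < k + 1 := by omega
        have h2 : ¬ j < k := by omega
        have h3 : j ≠ k := by omega
        simp [h1, h2, h3]
    rw [this, hval k (a k) hk1 hk2]
  have hlt : ∀ k, 1 ≤ k → k ≤ N → S k < S (k + 1) := by
    intro k hk1 hk2
    rw [hstep k hk1 hk2]
    have := ha k hk1 (by omega)
    linarith
  have hmono : ∀ j k, 1 ≤ j → j ≤ k → k ≤ N + 1 → S j ≤ S k := by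
    intro j k hj hjk hk
    induction k with
    | zero => omega
    | succ k ih =>
      rcases Nat.lt_or_ge j (k + 1) with h | h
      · have h1 : S j ≤ S k := ih (by omega) (by omega)
        have h2 := hlt k (by omega) (by omega)
        linarith
      · have : j = k + 1 := by omega
        rw [this]
  have hsmono : ∀ j k, 1 ≤ j → j < k → k ≤ N + 1 → S j < S k := by
    intro j k hj hjk hk
    have h1 : S j ≤ S (k - 1) := hmono j (k - 1) hj (by omega) (by omega)
    have h2 := hlt (k - 1) (by omega) (by omega)
    have h3 : k - 1 + 1 = k := by omega
    rw [h3] at h2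
    linarith
  set Sb : ℝ := ∑ j ∈ Finset.Icc 1 N, b j with hSb
  have hlb : S 1 ≤ Sb := by
    apply Finset.sum_le_sum
    intro j hj
    simp only [Finset.mem_Icc] at hj
    have h1 : ¬ j < 1 := by omega
    rw [if_neg h1]
    exact (hb j hj.1 hj.2).1
  have hub : Sb ≤ S (N + 1) := by
    apply Finset.sum_le_sum
    intro j hj
    simp only [Finset.mem_Icc] at hj
    have h1 : j < N + 1 := by omega
    rw [if_pos h1]
    exact (hb j hj.1 hj.2).2
  -- choose the largest k with S k ≤ Sb
  set K : Finset ℕ := (Finset.Icc 1 N).filter (fun k => S k ≤ Sb) with hK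
  have h1K : 1 ∈ K := by
    simp only [hK, Finset.mem_filter, Finset.mem_Icc]
    exact ⟨⟨le_refl 1, hN1⟩, hlb⟩
  have hKne : K.Nonempty := ⟨1, h1K⟩
  set k : ℕ := K.max' hKne with hkdef
  have hkmem : k ∈ K := Finset.max'_mem K hKne
  have hkmax : ∀ x ∈ K, x ≤ k := fun x hx => Finset.le_max' K x hx
  simp only [hK, Finset.mem_filter, Finset.mem_Icc] at hkmem
  obtain ⟨⟨hk1, hkN⟩, hkle⟩ := hkmem
  have hupstrict : k < N → Sb < S (k + 1) := by
    intro hkN'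
    by_contra h
    push_neg at h
    have : k + 1 ∈ K := by
      simp only [hK, Finset.mem_filter, Finset.mem_Icc]
      exact ⟨⟨by omega, by omega⟩, h⟩
    have := hkmax _ this
    omega
  have hup : Sb ≤ S (k + 1) := by
    rcases Nat.lt_or_ge k N with h | h
    · exact le_of_lt (hupstrict h)
    · have : k = N := by omega
      rw [this]
      exact hub
  refine ⟨k, Sb - S k + a (k + 1), hk1, hkN, by linarith, ?_, ?_, ?_⟩
  · have := hstep k hk1 hkN
    linarith
  · rw [hval k _ hk1 hkN]
    ring
  · intro k' ck hk'1 hk'N hck1 hck2 hsum j hj1 hjN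
    rw [hval k' ck hk'1 hk'N] at hsum
    have hlb' : S k' ≤ Sb := by linarith
    have hub' : Sb ≤ S (k' + 1) := by
      have := hstep k' hk'1 hk'N
      linarith
    rcases lt_trichotomy k' k with h | h | h
    · -- k' < k : forced k = k' + 1, ck = a k', bk = a (k+1)
      have hkk : k = k' + 1 := by
        by_contra hne
        have : k' + 1 < k := by omega
        have := hsmono (k' + 1) k (by omega) this (by omega)
        linarith
      have he : S (k' + 1) = S k := by rw [hkk]
      have hSeq : Sb = S k := by linarith
      have hck : ck = a k' := by
        have := hstep k' hk'1 hk'N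
        linarith
      have hbk : Sb - S k + a (k + 1) = a (k + 1) := by
        rw [hSeq]; ring
      rw [hbk, hck]
      rcases lt_trichotomy j k' with hj | hj | hj
      · have h1 : j < k := by omega
        simp [hj, h1]
      · subst hj
        have h1 : j < k := by omega
        simp [h1]
      · have h1 : ¬ j < k' := by omega
        have h2 : j ≠ k' := by omega
        rcases lt_trichotomy j k with hj2 | hj2 | hj2
        · omega
        · subst hj2
          simp [h1, h2, hkk]
        · have h3 : ¬ j < k := by omega
          have h4 : j ≠ k := by omega
          simp [h1, h2, h3, h4]
    · -- k' = k
      have hck : ck = Sb - S k + a (k + 1) := by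
        rw [h] at hsum
        linarith
      rw [h, hck]
    · -- k' > k : impossible
      exfalso
      have h1 : k < N := by omega
      have h2 := hupstrict h1
      have h3 : S (k + 1) ≤ S k' := hmono (k + 1) k' (by omega) (by omega) (by omega)
      linarith
end

section
/- Let F be a nonempty face of GZ(λ). Then F is covered by the tableau regions: F equals the union, over all shifted Young tableaux T associated to F, of the closed sets R_T := {x ∈ F : x_{i,j} ≥ x_{k,ℓ} for all pairs of positions with T(i,j) ≤ T(k,ℓ)} (with the convention x_{i,i} = λ_i). -/
open MeasureTheory

/-- Off-diagonal positions `(i,j)` with `1 ≤ i < j ≤ n` (1-indexed, encoded in `Fin (n+1)`). -/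
abbrev GZpos (n : ℕ) := {p : Fin (n + 1) × Fin (n + 1) // 0 < (p.1 : ℕ) ∧ (p.1 : ℕ) < (p.2 : ℕ)}

/-- The entry `x_{i,j}` of the extended Gelfand–Zetlin array, with the convention
`x_{i,i} = λ_i` (and value `λ_i` for out-of-range indices, which are never used). -/
def entry (n : ℕ) (lam : ℕ → ℝ) (x : GZpos n → ℝ) (i j : ℕ) : ℝ :=
  if h : 0 < i ∧ i < j ∧ j ≤ n then
    x ⟨(⟨i, by omega⟩, ⟨j, by omega⟩), ⟨h.1, h.2.1⟩⟩
  else lam i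

/-- The Gelfand–Zetlin polytope `GZ(λ)` in `ℝ^{n(n-1)/2}`. -/
def GZ (n : ℕ) (lam : ℕ → ℝ) : Set (GZpos n → ℝ) :=
  {x | ∀ i j : ℕ, 0 < i → i ≤ j → j + 1 ≤ n →
    entry n lam x i (j + 1) ≤ entry n lam x i j ∧
    entry n lam x (i + 1) (j + 1) ≤ entry n lam x i (j + 1)}

/-- A position `(i,j)` of the triangular array: `1 ≤ i ≤ j ≤ n`. -/
def InTri (n i j : ℕ) : Prop := 0 < i ∧ i ≤ j ∧ j ≤ n

/-- An adjacent-pair equality: `((i,j), true)` is the row equality `x_{i,j} = x_{i,j+1}`,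
`((i,j), false)` is the column equality `x_{i,j} = x_{i+1,j}`. -/
def IsEqn (n : ℕ) (e : (ℕ × ℕ) × Bool) : Prop :=
  0 < e.1.1 ∧ e.1.1 ≤ e.1.2 ∧ e.1.2 ≤ n ∧
    (if e.2 then e.1.2 + 1 ≤ n else e.1.1 + 1 ≤ e.1.2)

/-- The equality `e` holds at the point `x`. -/
def eqHolds (n : ℕ) (lam : ℕ → ℝ) (x : GZpos n → ℝ) (e : (ℕ × ℕ) × Bool) : Prop :=
  if e.2 then entry n lam x e.1.1 e.1.2 = entry n lam x e.1.1 (e.1.2 + 1)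
  else entry n lam x e.1.1 e.1.2 = entry n lam x (e.1.1 + 1) e.1.2

/-- The face of `GZ(λ)` cut out by the set `E` of adjacent-pair equalities. -/
def face (n : ℕ) (lam : ℕ → ℝ) (E : Set ((ℕ × ℕ) × Bool)) : Set (GZpos n → ℝ) :=
  {x ∈ GZ n lam | ∀ e ∈ E, eqHolds n lam x e}

/-- A shifted Young tableau associated to the face `F`: values in `{1,…,M}` (0 outside the
triangle), no value gaps, weakly increasing in rows and columns, with equal adjacent entries
exactly where the corresponding equality holds identically on `F`. -/
def IsShYT (n : ℕ) (lam : ℕ → ℝ) (F : Set (GZpos n → ℝ)) (T : ℕ → ℕ → ℕ) : Prop :=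
  (∀ i j, ¬ InTri n i j → T i j = 0) ∧
  (∀ i j, InTri n i j → 1 ≤ T i j) ∧
  (∀ m, 1 ≤ m → (∃ i j, InTri n i j ∧ m ≤ T i j) → ∃ i j, InTri n i j ∧ T i j = m) ∧
  (∀ i j, 0 < i → i ≤ j → j + 1 ≤ n → T i j ≤ T i (j + 1)) ∧
  (∀ i j, 0 < i → i + 1 ≤ j → j ≤ n → T i j ≤ T (i + 1) j) ∧
  (∀ i j, 0 < i → i ≤ j → j + 1 ≤ n →
    (T i j = T i (j + 1) ↔ ∀ x ∈ F, entry n lam x i j = entry n lam x i (j + 1))) ∧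
  (∀ i j, 0 < i → i + 1 ≤ j → j ≤ n →
    (T i j = T (i + 1) j ↔ ∀ x ∈ F, entry n lam x i j = entry n lam x (i + 1) j))

/-- The diagonal condition `T(i,i) = i + p_1 + ⋯ + p_{i-1}`. -/
def hasDiag (n : ℕ) (T : ℕ → ℕ → ℕ) (p : ℕ → ℕ) : Prop :=
  ∀ i, 1 ≤ i → i ≤ n → T i i = i + ∑ k ∈ Finset.Ico 1 i, p k

/-- `N_F(p_1,…,p_{n-1})`: the number of shifted Young tableaux associated to `F` with
diagonal vector determined by `p`. -/
noncomputable def NF (n : ℕ) (lam : ℕ → ℝ) (F : Set (GZpos n → ℝ)) (p : ℕ → ℕ) : ℕ :=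
  Set.ncard {T : ℕ → ℕ → ℕ | IsShYT n lam F T ∧ hasDiag n T p}

/-- All positions `(i,j)` with `1 ≤ i ≤ j ≤ n` (including the diagonal). -/
abbrev Tri (n : ℕ) := {p : Fin (n + 1) × Fin (n + 1) // 0 < (p.1 : ℕ) ∧ (p.1 : ℕ) ≤ (p.2 : ℕ)}

/-- The value of the (extended) coordinate at a triangular position. -/
def entryT (n : ℕ) (lam : ℕ → ℝ) (x : GZpos n → ℝ) (p : Tri n) : ℝ :=
  entry n lam x (p.1.1 : ℕ) (p.1.2 : ℕ)

/-- `q` is the east or south neighbour of `p`. -/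
def adjTri (n : ℕ) (p q : Tri n) : Prop :=
  ((q.1.1 : ℕ) = (p.1.1 : ℕ) ∧ (q.1.2 : ℕ) = (p.1.2 : ℕ) + 1) ∨
  ((q.1.1 : ℕ) = (p.1.1 : ℕ) + 1 ∧ (q.1.2 : ℕ) = (p.1.2 : ℕ))

/-- The equivalence relation on positions generated by the adjacent-pair equalities holding
identically on `F`. -/
def faceSetoid (n : ℕ) (lam : ℕ → ℝ) (F : Set (GZpos n → ℝ)) : Setoid (Tri n) :=
  ⟨Relation.EqvGen (fun p q => adjTri n p q ∧ ∀ x ∈ F, entryT n lam x p = entryT n lam x q),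
   Relation.EqvGen.is_equivalence _⟩

/-- A class is free if it contains no diagonal position. -/
def isFreeClass (n : ℕ) (lam : ℕ → ℝ) (F : Set (GZpos n → ℝ))
    (c : Quotient (faceSetoid n lam F)) : Prop :=
  ∀ p : Tri n, Quotient.mk (faceSetoid n lam F) p = c → (p.1.1 : ℕ) ≠ (p.1.2 : ℕ)

/-- The volume of a face `F`: the Lebesgue measure of the image of `F` under the projection
selecting one coordinate from each free class. -/
noncomputable def faceVol (n : ℕ) (lam : ℕ → ℝ) (F : Set (GZpos n → ℝ)) : ℝ := by
  classical
  letI : Fintype (Quotient (faceSetoid n lam F)) := Quotient.fintype _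
  exact (volume ((fun x (c : {c : Quotient (faceSetoid n lam F) // isFreeClass n lam F c}) =>
    entryT n lam x (Quotient.out c.1)) '' F)).toReal

/-!
Given `x ∈ F`, rank the positions of the triangle by decreasing `x_{i,j}`, breaking ties by
decreasing `y_{i,j}`, where `y = ∑ z_{p,q}` sums, over all pairs of positions, a point
`z_{p,q} ∈ F` with `z_p ≠ z_q` whenever `F` has one. Along rows and columns every point of `F`
weakly decreases, and `y` strictly decreases at each step where `F` does not force equality,
so the dense ranking is a shifted Young tableau associated to `F`; `x` lies in its region
because the ranking refines the order of the coordinates of `x`.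
-/

open Finset

section DenseRank

variable {β : Type*} [LinearOrder β] (t : Finset β)

def denseRank (v : β) : ℕ := #{u ∈ t | u ≤ v}

variable {t}

lemma denseRank_lt_denseRank {u v : β} (hv : v ∈ t) (huv : u < v) :
    denseRank t u < denseRank t v := by
  refine card_lt_card (ssubset_iff_of_subset ?_ |>.2 ⟨v, ?_, ?_⟩)
  · exact fun w hw => by
      rw [mem_filter] at hw ⊢
      exact ⟨hw.1, hw.2.trans huv.le⟩
  · exact mem_filter.2 ⟨hv, le_rfl⟩
  · exact fun h => (mem_filter.1 h).2.not_gt huv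

lemma le_of_denseRank_le {u v : β} (hu : u ∈ t) (h : denseRank t u ≤ denseRank t v) : u ≤ v :=
  not_lt.1 fun hvu => (denseRank_lt_denseRank hu hvu).not_ge h

lemma one_le_denseRank {v : β} (hv : v ∈ t) : 1 ≤ denseRank t v :=
  card_pos.2 ⟨v, mem_filter.2 ⟨hv, le_rfl⟩⟩

lemma denseRank_le_card (v : β) : denseRank t v ≤ #t := card_filter_le _ _

lemma image_denseRank : t.image (denseRank t) = Icc 1 #t := by
  refine eq_of_subset_of_card_le (fun m hm => ?_) ?_
  · obtain ⟨v, hv, rfl⟩ := mem_image.1 hm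
    exact mem_Icc.2 ⟨one_le_denseRank hv, denseRank_le_card v⟩
  · have hinj : Set.InjOn (denseRank t) t := fun u hu v hv huv =>
      (le_of_denseRank_le hu huv.le).antisymm (le_of_denseRank_le hv huv.ge)
    rw [card_image_of_injOn hinj, Nat.card_Icc, Nat.add_sub_cancel]

lemma exists_denseRank_eq {m : ℕ} {v : β} (hm : 1 ≤ m) (hmv : m ≤ denseRank t v) :
    ∃ u ∈ t, denseRank t u = m := by
  have : m ∈ t.image (denseRank t) := by
    rw [image_denseRank]
    exact mem_Icc.2 ⟨hm, hmv.trans (denseRank_le_card v)⟩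
  simpa using this

end DenseRank

section GenericRank

variable {X κ : Type*} (F : Set X) (φ : κ → X → ℝ) (K : Finset κ) (x : X)

noncomputable def separatingPoint (a b : κ) : X :=
  open Classical in
  if h : ∃ z ∈ F, φ a z ≠ φ b z then h.choose else x

noncomputable def genericValue (k : κ) : ℝ :=
  ∑ ab ∈ K ×ˢ K, φ k (separatingPoint F φ x ab.1 ab.2)

noncomputable def genericWeight (k : κ) : ℝ ×ₗ ℝ :=
  toLex (-φ k x, -genericValue F φ K x k)

noncomputable def genericRank (k : κ) : ℕ :=
  denseRank (K.image (genericWeight F φ K x)) (genericWeight F φ K x k)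

variable {F φ K x}

lemma separatingPoint_mem (hx : x ∈ F) (a b : κ) : separatingPoint F φ x a b ∈ F := by
  unfold separatingPoint
  split_ifs with h
  · exact h.choose_spec.1
  · exact hx

lemma separatingPoint_ne {a b : κ} (h : ∃ z ∈ F, φ a z ≠ φ b z) :
    φ a (separatingPoint F φ x a b) ≠ φ b (separatingPoint F φ x a b) := by
  unfold separatingPoint
  rw [dif_pos h]
  exact h.choose_spec.2

lemma genericWeight_eq (hx : x ∈ F) {a b : κ} (hab : ∀ z ∈ F, φ a z = φ b z) :
    genericWeight F φ K x a = genericWeight F φ K x b := by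
  have hvalue : genericValue F φ K x a = genericValue F φ K x b :=
    sum_congr rfl fun _ _ => hab _ (separatingPoint_mem hx _ _)
  rw [genericWeight, genericWeight, hab x hx, hvalue]

lemma genericValue_lt (hx : x ∈ F) {a b : κ} (ha : a ∈ K) (hb : b ∈ K)
    (hle : ∀ z ∈ F, φ b z ≤ φ a z) (hne : ∃ z ∈ F, φ a z ≠ φ b z) :
    genericValue F φ K x b < genericValue F φ K x a := by
  refine sum_lt_sum (fun _ _ => hle _ (separatingPoint_mem hx _ _))
    ⟨(a, b), mem_product.2 ⟨ha, hb⟩, ?_⟩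
  exact (hle _ (separatingPoint_mem hx a b)).lt_of_ne (separatingPoint_ne hne).symm

lemma genericWeight_lt (hx : x ∈ F) {a b : κ} (ha : a ∈ K) (hb : b ∈ K)
    (hle : ∀ z ∈ F, φ b z ≤ φ a z) (hne : ∃ z ∈ F, φ a z ≠ φ b z) :
    genericWeight F φ K x a < genericWeight F φ K x b := by
  rw [genericWeight, genericWeight, Prod.Lex.toLex_lt_toLex]
  rcases (hle x hx).lt_or_eq with hlt | heq
  · exact Or.inl (neg_lt_neg hlt)
  · exact Or.inr ⟨by rw [heq], neg_lt_neg (genericValue_lt hx ha hb hle hne)⟩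

lemma one_le_genericRank {k : κ} (hk : k ∈ K) : 1 ≤ genericRank F φ K x k :=
  one_le_denseRank (mem_image_of_mem _ hk)

lemma exists_genericRank_eq {m : ℕ} {k : κ} (hm : 1 ≤ m) (hmk : m ≤ genericRank F φ K x k) :
    ∃ a ∈ K, genericRank F φ K x a = m := by
  obtain ⟨w, hw, hwm⟩ := exists_denseRank_eq hm hmk
  obtain ⟨a, ha, rfl⟩ := mem_image.1 hw
  exact ⟨a, ha, hwm⟩

lemma genericRank_le_genericRank_and_eq_iff (hx : x ∈ F) {a b : κ} (ha : a ∈ K) (hb : b ∈ K)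
    (hle : ∀ z ∈ F, φ b z ≤ φ a z) :
    genericRank F φ K x a ≤ genericRank F φ K x b ∧
      (genericRank F φ K x a = genericRank F φ K x b ↔ ∀ z ∈ F, φ a z = φ b z) := by
  by_cases hne : ∃ z ∈ F, φ a z ≠ φ b z
  · have h := denseRank_lt_denseRank (mem_image_of_mem _ hb) (genericWeight_lt hx ha hb hle hne)
    obtain ⟨z, hz, hz_ne⟩ := hne
    exact ⟨h.le, iff_of_false h.ne fun hab => hz_ne (hab z hz)⟩
  · have hab : ∀ z ∈ F, φ a z = φ b z := by simpa using hne
    have h : genericRank F φ K x a = genericRank F φ K x b :=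
      congrArg (denseRank _) (genericWeight_eq hx hab)
    exact ⟨h.le, iff_of_true h hab⟩

lemma apply_le_of_genericRank_le {a b : κ} (ha : a ∈ K)
    (hab : genericRank F φ K x a ≤ genericRank F φ K x b) : φ b x ≤ φ a x := by
  have h := le_of_denseRank_le (mem_image_of_mem _ ha) hab
  rw [genericWeight, genericWeight, Prod.Lex.toLex_le_toLex] at h
  rcases h with h | ⟨h, -⟩ <;> linarith

end GenericRank

section GelfandZetlin

variable {n : ℕ} {lam : ℕ → ℝ} {F : Set (GZpos n → ℝ)} {x : GZpos n → ℝ}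

instance (n i j : ℕ) : Decidable (InTri n i j) := inferInstanceAs (Decidable (_ ∧ _ ∧ _))

def triPositions (n : ℕ) : Finset (ℕ × ℕ) := {p ∈ Icc 1 n ×ˢ Icc 1 n | p.1 ≤ p.2}

lemma mem_triPositions {i j : ℕ} : (i, j) ∈ triPositions n ↔ InTri n i j := by
  simp only [triPositions, mem_filter, mem_product, mem_Icc, InTri]
  omega

lemma entry_succ_right_le (hx : x ∈ GZ n lam) {i j : ℕ} (hi : 0 < i) (hij : i ≤ j)
    (hj : j + 1 ≤ n) : entry n lam x i (j + 1) ≤ entry n lam x i j :=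
  (hx i j hi hij hj).1

lemma entry_succ_left_le (hx : x ∈ GZ n lam) {i j : ℕ} (hi : 0 < i) (hij : i + 1 ≤ j)
    (hj : j ≤ n) : entry n lam x (i + 1) j ≤ entry n lam x i j := by
  obtain ⟨j, rfl⟩ : ∃ j', j = j' + 1 := ⟨j - 1, by omega⟩
  exact (hx i j hi (by omega) hj).2

variable (n lam F x) in
noncomputable def gzTableau (i j : ℕ) : ℕ :=
  if InTri n i j then
    genericRank F (fun p z => entry n lam z p.1 p.2) (triPositions n) x (i, j)
  else 0

lemma gzTableau_of_inTri {i j : ℕ} (h : InTri n i j) :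
    gzTableau n lam F x i j =
      genericRank F (fun p z => entry n lam z p.1 p.2) (triPositions n) x (i, j) :=
  if_pos h

lemma gzTableau_adjacent (hx : x ∈ F) {i j k l : ℕ} (hij : InTri n i j)
    (hkl : InTri n k l) (hle : ∀ z ∈ F, entry n lam z k l ≤ entry n lam z i j) :
    gzTableau n lam F x i j ≤ gzTableau n lam F x k l ∧
      (gzTableau n lam F x i j = gzTableau n lam F x k l ↔
        ∀ z ∈ F, entry n lam z i j = entry n lam z k l) := by
  rw [gzTableau_of_inTri hij, gzTableau_of_inTri hkl]
  exact genericRank_le_genericRank_and_eq_iff hx (mem_triPositions.2 hij)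
    (mem_triPositions.2 hkl) hle

lemma isShYT_gzTableau (hF : F ⊆ GZ n lam) (hx : x ∈ F) :
    IsShYT n lam F (gzTableau n lam F x) := by
  have hrow : ∀ i j, 0 < i → i ≤ j → j + 1 ≤ n → _ := fun i j hi hij hj =>
    gzTableau_adjacent hx (by exact ⟨hi, hij, by omega⟩) (by exact ⟨hi, by omega, hj⟩)
      fun z hz => entry_succ_right_le (hF hz) hi hij hj
  have hcol : ∀ i j, 0 < i → i + 1 ≤ j → j ≤ n → _ := fun i j hi hij hj =>
    gzTableau_adjacent hx (by exact ⟨hi, by omega, hj⟩) (by exact ⟨by omega, hij, hj⟩)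
      fun z hz => entry_succ_left_le (hF hz) hi hij hj
  refine ⟨fun i j h => if_neg h, fun i j h => ?_, ?_, fun i j hi hij hj => (hrow i j hi hij hj).1,
    fun i j hi hij hj => (hcol i j hi hij hj).1, fun i j hi hij hj => (hrow i j hi hij hj).2,
    fun i j hi hij hj => (hcol i j hi hij hj).2⟩
  · rw [gzTableau_of_inTri h]
    exact one_le_genericRank (mem_triPositions.2 h)
  · rintro m hm ⟨i, j, hij, hmij⟩
    rw [gzTableau_of_inTri hij] at hmij
    obtain ⟨⟨k, l⟩, hkl, hm⟩ := exists_genericRank_eq hm hmij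
    exact ⟨k, l, mem_triPositions.1 hkl, by rwa [gzTableau_of_inTri (mem_triPositions.1 hkl)]⟩

lemma entry_le_of_gzTableau_le {i j k l : ℕ} (hij : InTri n i j) (hkl : InTri n k l)
    (h : gzTableau n lam F x i j ≤ gzTableau n lam F x k l) :
    entry n lam x k l ≤ entry n lam x i j := by
  rw [gzTableau_of_inTri hij, gzTableau_of_inTri hkl] at h
  exact apply_le_of_genericRank_le (mem_triPositions.2 hij) h

end GelfandZetlin

theorem stmt_9_general (n : ℕ) (lam : ℕ → ℝ)
    (E : Set ((ℕ × ℕ) × Bool)) :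
    face n lam E =
      ⋃ (T : ℕ → ℕ → ℕ) (_ : IsShYT n lam (face n lam E) T),
        {x ∈ face n lam E |
          ∀ i j k l, InTri n i j → InTri n k l → T i j ≤ T k l →
            entry n lam x k l ≤ entry n lam x i j} := by
  refine Set.Subset.antisymm (fun x hx => ?_) (Set.iUnion₂_subset fun _ _ => Set.sep_subset _ _)
  have hF : face n lam E ⊆ GZ n lam := fun _ hz => hz.1
  exact Set.mem_iUnion₂.2 ⟨gzTableau n lam (face n lam E) x, isShYT_gzTableau hF hx, hx,
    fun i j k l hij hkl => entry_le_of_gzTableau_le hij hkl⟩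

/-- a nonempty face `F` of `GZ(λ)` is the union, over shifted Young tableaux `T`
associated to `F`, of the regions `R_T = {x ∈ F : x_{i,j} ≥ x_{k,ℓ} whenever T(i,j) ≤ T(k,ℓ)}`. -/
theorem stmt_9 (n : ℕ) (hn : 2 ≤ n) (lam : ℕ → ℝ)
    (hlam : ∀ i, 1 ≤ i → i < n → lam (i + 1) < lam i)
    (E : Set ((ℕ × ℕ) × Bool)) (hE : ∀ e ∈ E, IsEqn n e)
    (hne : (face n lam E).Nonempty) :
    face n lam E =
      ⋃ (T : ℕ → ℕ → ℕ) (_ : IsShYT n lam (face n lam E) T),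
        {x ∈ face n lam E |
          ∀ i j k l, InTri n i j → InTri n k l → T i j ≤ T k l →
            entry n lam x k l ≤ entry n lam x i j} :=
  stmt_9_general n lam E
end

section
/- For every r ∈ F_n, every extreme point of the convex set Φ(F(r)) is a vertex of the permutohedron: every extreme point of Φ(F(r)) is of the form (λ_{σ(1)}, λ_{σ(2)}, …, λ_{σ(n)}) for some permutation σ ∈ S_n. -/
open MeasureTheory

/-- The index set `F_n = {r = (r_1,…,r_{n-1}) : 1 ≤ r_j ≤ n-j}`, encoded as functions
`ℕ → ℕ` vanishing outside `{1,…,n-1}`. -/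
def calF (n : ℕ) : Set (ℕ → ℕ) :=
  {r | (∀ j, 1 ≤ j → j ≤ n - 1 → 1 ≤ r j ∧ r j ≤ n - j) ∧
       ∀ j, j = 0 ∨ n - 1 < j → r j = 0}

/-- The face `F(r)` of `GZ(λ)`, defined by the equalities `x_{i,j+i} = x_{i,j+i-1}` for
`1 ≤ i < r_j` and `x_{i,j+i} = x_{i+1,j+i}` for `r_j < i ≤ n-j`, for each `1 ≤ j ≤ n-1`. -/
def Fface (n : ℕ) (lam : ℕ → ℝ) (r : ℕ → ℕ) : Set (GZpos n → ℝ) :=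
  {x ∈ GZ n lam | ∀ j, 1 ≤ j → j ≤ n - 1 →
    (∀ i, 1 ≤ i → i < r j → entry n lam x i (j + i) = entry n lam x i (j + i - 1)) ∧
    (∀ i, r j < i → i ≤ n - j → entry n lam x i (j + i) = entry n lam x (i + 1) (j + i))}

/-- `y_k = ∑_{i=1}^{n-k} x_{i,i+k}`. -/
def yco (n : ℕ) (lam : ℕ → ℝ) (x : GZpos n → ℝ) (k : ℕ) : ℝ :=
  ∑ i ∈ Finset.Icc 1 (n - k), entry n lam x i (i + k)

/-- The map `Φ((x_{i,j})) = (y_0 - y_1, y_1 - y_2, …, y_{n-2} - y_{n-1}, y_{n-1})`. -/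
def Phi (n : ℕ) (lam : ℕ → ℝ) (x : GZpos n → ℝ) : Fin n → ℝ :=
  fun m => if (m : ℕ) = n - 1 then yco n lam x (n - 1)
           else yco n lam x (m : ℕ) - yco n lam x ((m : ℕ) + 1)

/-- The permutohedron `Perm(λ) ⊆ ℝ^n`: the convex hull of the points
`(λ_{σ(1)}, …, λ_{σ(n)})` for `σ ∈ S_n`. -/
def PermP (n : ℕ) (lam : ℕ → ℝ) : Set (Fin n → ℝ) :=
  convexHull ℝ {v | ∃ σ : Equiv.Perm (Fin n), v = fun i => lam ((σ i : ℕ) + 1)}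

/-!
Let `x ∈ F(r)` with `Φ(x)` extreme. For each `j`, the entry `v = x_{r_j, r_j + j}` equals one of
its neighbours `x_{r_j, r_j + j - 1}` or `x_{r_j + 1, r_j + j}`. Otherwise it lies strictly between
them; since the diagonals of a Gelfand–Zetlin pattern are antitone, no entry of diagonal `j - 1`
equals `v`, so shifting every entry equal to `v` on the diagonals `≥ j` by a small `±t` keeps
`x` in `F(r)` and moves `Φ(x)` by `±t w` with `w_{j-1} = -#{entries equal to v on diagonal j} ≠ 0`.

Consequently the diagonal `(x_{i,i+j})_i` is obtained from `(x_{i,i+j-1})_i` by deleting one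
entry, and that entry is `y_{j-1} - y_j = Φ(x)_{j-1}`. Since diagonal `0` is `λ` and diagonal `n`
is empty, `Φ(x)` lists the entries of `λ` in the order in which they are deleted.
-/

theorem exists_perm_eq_comp_of_ofFn_perm {α : Type*} [LinearOrder α] {n : ℕ}
    {f g : Fin n → α} (h : (List.ofFn f).Perm (List.ofFn g)) :
    ∃ σ : Equiv.Perm (Fin n), f = g ∘ σ := by
  have hsorted : f ∘ Tuple.sort f = g ∘ Tuple.sort g := by
    refine List.ofFn_injective (List.Perm.eq_of_sortedLE ?_ ?_ ?_)
    · exact (Tuple.monotone_sort f).sortedLE_ofFn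
    · exact (Tuple.monotone_sort g).sortedLE_ofFn
    · exact (((Tuple.sort f).ofFn_comp_perm f).trans h).trans
        ((Tuple.sort g).ofFn_comp_perm g).symm
  refine ⟨(Tuple.sort f).symm.trans (Tuple.sort g), ?_⟩
  rw [Equiv.coe_trans, ← Function.comp_assoc, ← hsorted, Function.comp_assoc,
    Equiv.self_comp_symm, Function.comp_id]

theorem ofFn_sum_sub_append_perm {α : Type*} [AddCommGroup α] (L : ℕ → List α) {K : ℕ}
    (hL : ∀ k < K, ∃ q < (L k).length, L (k + 1) = (L k).eraseIdx q) :
    ∀ k ≤ K, (List.ofFn (fun m : Fin k => (L m).sum - (L (m + 1)).sum) ++ L k).Perm (L 0) := by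
  intro k hk
  induction k with
  | zero => simp
  | succ k ih =>
    obtain ⟨q, hq, hLq⟩ := hL k (by omega)
    have hcons := List.getElem_cons_eraseIdx_perm hq
    have hsum : (L k).sum - (L (k + 1)).sum = (L k)[q] := by
      rw [← hcons.sum_eq, hLq, List.sum_cons, add_sub_cancel_right]
    refine List.Perm.trans ?_ (ih (by omega))
    rw [List.ofFn_succ', List.concat_eq_append, List.append_assoc]
    refine List.Perm.append_left _ ?_
    rw [Fin.val_last, hsum, hLq, List.singleton_append]
    exact hcons

theorem eq_zero_of_mem_extremePoints_of_add_mem_of_sub_mem {E : Type*} [AddCommGroup E]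
    [Module ℝ E] {A : Set E} {p w : E} (hp : p ∈ A.extremePoints ℝ) (hadd : p + w ∈ A)
    (hsub : p - w ∈ A) : w = 0 :=
  add_eq_left.mp (hp.2 hadd hsub (mem_openSegment_add_sub p w))

theorem exists_pos_le_abs_sub_of_finite {V : Set ℝ} (hV : V.Finite) (v₀ : ℝ) :
    ∃ δ > 0, ∀ u ∈ V, u ≠ v₀ → δ ≤ |u - v₀| := by
  have hopen : IsOpen (V \ {v₀})ᶜ := (hV.sdiff.isClosed).isOpen_compl
  obtain ⟨δ, hδ, hball⟩ := Metric.isOpen_iff.mp hopen v₀ (by simp)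
  refine ⟨δ, hδ, fun u hu hne => not_lt.mp fun hlt => hball ?_ ⟨hu, hne⟩⟩
  rwa [Metric.mem_ball, Real.dist_eq]

theorem monotoneOn_ite_eq_add {V : Set ℝ} {v₀ δ t : ℝ}
    (hgap : ∀ u ∈ V, u ≠ v₀ → δ ≤ |u - v₀|) (ht : |t| ≤ δ) :
    MonotoneOn (fun u => if u = v₀ then u + t else u) V := by
  intro a ha b hb hab
  obtain ⟨htl, htr⟩ := abs_le.mp ht
  by_cases hav : a = v₀ <;> by_cases hbv : b = v₀ <;> simp only [hav, hbv, if_true, if_false]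
  · linarith
  · have hlt : v₀ < b := lt_of_le_of_ne (hav ▸ hab) (Ne.symm hbv)
    have := hgap b hb hbv
    rw [abs_of_pos (sub_pos.mpr hlt)] at this
    linarith
  · have hlt : a < v₀ := lt_of_le_of_ne (hbv ▸ hab) hav
    have := hgap a ha hav
    rw [abs_of_neg (sub_neg.mpr hlt)] at this
    linarith
  · exact hab

theorem ofFn_eq_eraseIdx_ofFn {α : Type*} {m m' q : ℕ} (f g : ℕ → α) (hm : m = m' + 1)
    (hq : q < m) (h : ∀ i < m', g i = if i < q then f i else f (i + 1)) :
    List.ofFn (fun i : Fin m' => g i) = (List.ofFn fun i : Fin m => f i).eraseIdx q := by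
  refine List.ext_getElem (by simp [List.length_eraseIdx, hq]; omega) fun i hi _ => ?_
  rw [List.length_ofFn] at hi
  simp only [List.getElem_ofFn, List.getElem_eraseIdx, h i hi]
  split_ifs <;> rfl

section GelfandZetlin

variable {n : ℕ} {lam : ℕ → ℝ}

theorem entry_add_smul (x z : GZpos n → ℝ) (t : ℝ) (i j : ℕ) :
    entry n lam (x + t • z) i j = entry n lam x i j + t * entry n 0 z i j := by
  unfold entry
  split_ifs <;> simp

theorem Phi_add_smul (x z : GZpos n → ℝ) (t : ℝ) :
    Phi n lam (x + t • z) = Phi n lam x + t • Phi n 0 z := by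
  have hy : ∀ k, yco n lam (x + t • z) k = yco n lam x k + t * yco n 0 z k := fun k => by
    simp only [yco, entry_add_smul, Finset.sum_add_distrib, Finset.mul_sum]
  funext m
  simp only [Phi, hy, Pi.add_apply, Pi.smul_apply, smul_eq_mul]
  split_ifs <;> ring

theorem entry_diag_antitone {x : GZpos n → ℝ} (hx : x ∈ GZ n lam) (k : ℕ) {i₁ i₂ : ℕ}
    (hi₁ : 0 < i₁) (hle : i₁ ≤ i₂) (hi₂ : i₂ + k ≤ n) :
    entry n lam x i₂ (i₂ + k) ≤ entry n lam x i₁ (i₁ + k) := by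
  induction i₂, hle using Nat.le_induction with
  | base => exact le_rfl
  | succ i hi ih =>
    obtain ⟨hright, hdown⟩ := hx i (i + k) (by omega) (by omega) (by omega)
    rw [show i + 1 + k = i + k + 1 by omega]
    exact (hdown.trans hright).trans (ih (by omega))

theorem exists_monotoneOn_entry_pair {x x' : GZpos n → ℝ} {k₀ : ℕ} {φ : ℝ → ℝ} {V : Set ℝ}
    (hφ : MonotoneOn φ V)
    (hfix : ∀ i, 0 < i → i + (k₀ - 1) ≤ n →
      φ (entry n lam x i (i + (k₀ - 1))) = entry n lam x i (i + (k₀ - 1)))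
    (hx' : ∀ i j, 0 < i → i ≤ j → j ≤ n →
      entry n lam x' i j = if k₀ ≤ j - i then φ (entry n lam x i j) else entry n lam x i j)
    {i₁ j₁ i₂ j₂ : ℕ} (h₁ : 0 < i₁ ∧ i₁ ≤ j₁ ∧ j₁ ≤ n) (h₂ : 0 < i₂ ∧ i₂ ≤ j₂ ∧ j₂ ≤ n)
    (hd : j₁ - i₁ = j₂ - i₂ + 1) :
    ∃ g : ℝ → ℝ, MonotoneOn g V ∧ entry n lam x' i₁ j₁ = g (entry n lam x i₁ j₁) ∧
      entry n lam x' i₂ j₂ = g (entry n lam x i₂ j₂) := by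
  rw [hx' i₁ j₁ h₁.1 h₁.2.1 h₁.2.2, hx' i₂ j₂ h₂.1 h₂.2.1 h₂.2.2]
  by_cases hb : k₀ ≤ j₂ - i₂
  · exact ⟨φ, hφ, if_pos (by omega), if_pos hb⟩
  by_cases ha : k₀ ≤ j₁ - i₁
  · obtain rfl : j₂ = i₂ + (k₀ - 1) := by omega
    exact ⟨φ, hφ, if_pos ha, by rw [if_neg hb, hfix i₂ h₂.1 h₂.2.2]⟩
  · exact ⟨id, monotoneOn_id, if_neg ha, if_neg hb⟩

-- Every defining relation of `F(r)` compares entries on adjacent diagonals, and on two adjacent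
-- diagonals `x'` is obtained from `x` by one and the same monotone map (`φ` or `id`).
theorem mem_Fface_of_monotoneOn {r : ℕ → ℕ} (hr : r ∈ calF n) {x x' : GZpos n → ℝ}
    (hx : x ∈ Fface n lam r) {k₀ : ℕ} {φ : ℝ → ℝ} {V : Set ℝ}
    (hV : ∀ i j, 0 < i → i ≤ j → j ≤ n → entry n lam x i j ∈ V) (hφ : MonotoneOn φ V)
    (hfix : ∀ i, 0 < i → i + (k₀ - 1) ≤ n →
      φ (entry n lam x i (i + (k₀ - 1))) = entry n lam x i (i + (k₀ - 1)))
    (hx' : ∀ i j, 0 < i → i ≤ j → j ≤ n →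
      entry n lam x' i j = if k₀ ≤ j - i then φ (entry n lam x i j) else entry n lam x i j) :
    x' ∈ Fface n lam r := by
  obtain ⟨hGZ, hface⟩ := hx
  have pair := fun {i₁ j₁ i₂ j₂ : ℕ} => exists_monotoneOn_entry_pair (i₁ := i₁) (j₁ := j₁)
    (i₂ := i₂) (j₂ := j₂) hφ hfix hx'
  refine ⟨fun i j hi hij hjn => ⟨?_, ?_⟩,
    fun j hj hjn => ⟨fun i hi hir => ?_, fun i hri hin => ?_⟩⟩
  · obtain ⟨g, hg, ha, hb⟩ := pair (i₁ := i) (j₁ := j + 1) (i₂ := i) (j₂ := j)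
      ⟨hi, by omega, hjn⟩ ⟨hi, hij, by omega⟩ (by omega)
    rw [ha, hb]
    exact hg (hV _ _ hi (by omega) hjn) (hV _ _ hi hij (by omega)) (hGZ i j hi hij hjn).1
  · obtain ⟨g, hg, ha, hb⟩ := pair (i₁ := i) (j₁ := j + 1) (i₂ := i + 1) (j₂ := j + 1)
      ⟨hi, by omega, hjn⟩ ⟨by omega, by omega, hjn⟩ (by omega)
    rw [ha, hb]
    exact hg (hV _ _ (by omega) (by omega) hjn) (hV _ _ hi (by omega) hjn)
      (hGZ i j hi hij hjn).2
  · have := (hr.1 j hj hjn).2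
    obtain ⟨g, hg, ha, hb⟩ := pair (i₁ := i) (j₁ := j + i) (i₂ := i) (j₂ := j + i - 1)
      ⟨hi, by omega, by omega⟩ ⟨hi, by omega, by omega⟩ (by omega)
    rw [ha, hb, (hface j hj hjn).1 i hi hir]
  · obtain ⟨g, hg, ha, hb⟩ := pair (i₁ := i) (j₁ := j + i) (i₂ := i + 1) (j₂ := j + i)
      ⟨by omega, by omega, by omega⟩ ⟨by omega, by omega, by omega⟩ (by omega)
    rw [ha, hb, (hface j hj hjn).2 i hri hin]

theorem entry_diag_ne_of_lt_of_lt {x : GZpos n → ℝ} (hx : x ∈ GZ n lam) {R k : ℕ} {v : ℝ}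
    (hRk : R + k ≤ n) (hlt : entry n lam x (R + 1) (R + 1 + k) < v)
    (hgt : v < entry n lam x R (R + k)) {i : ℕ} (hi : 0 < i) (hin : i + k ≤ n) :
    entry n lam x i (i + k) ≠ v := by
  rcases le_or_gt i R with hiR | hiR
  · exact (hgt.trans_le (entry_diag_antitone hx k hi hiR (by omega))).ne'
  · exact (hlt.trans_le' (entry_diag_antitone hx k (by omega) hiR hin)).ne

noncomputable def gzBump (x : GZpos n → ℝ) (k₀ : ℕ) (v₀ : ℝ) : GZpos n → ℝ :=
  fun p => if k₀ ≤ (p.1.2 : ℕ) - p.1.1 ∧ x p = v₀ then 1 else 0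

theorem entry_gzBump (x : GZpos n → ℝ) {k₀ : ℕ} (v₀ : ℝ) (hk₀ : 1 ≤ k₀) {i j : ℕ}
    (hi : 0 < i) (hj : j ≤ n) :
    entry n 0 (gzBump x k₀ v₀) i j = if k₀ ≤ j - i ∧ entry n lam x i j = v₀ then 1 else 0 := by
  by_cases hij : i < j
  · simp [entry, gzBump, hi, hij, hj]
  · rw [entry, dif_neg (by omega), if_neg (by omega), Pi.zero_apply]

theorem Phi_gzBump_ne_zero {x : GZpos n → ℝ} {k₀ : ℕ} (hk₀ : 1 ≤ k₀) (hk₀n : k₀ ≤ n - 1)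
    {R : ℕ} (hR : 1 ≤ R) (hRn : R ≤ n - k₀) :
    Phi n 0 (gzBump x k₀ (entry n lam x R (R + k₀))) ≠ 0 := by
  set z := gzBump x k₀ (entry n lam x R (R + k₀))
  have hbelow : yco n 0 z (k₀ - 1) = 0 := Finset.sum_eq_zero fun i hi => by
    rw [Finset.mem_Icc] at hi
    rw [entry_gzBump (lam := lam) x _ hk₀ (by omega) (by omega), if_neg (by omega)]
  have hon : 0 < yco n 0 z k₀ := by
    refine Finset.sum_pos' (fun i hi => ?_) ⟨R, Finset.mem_Icc.mpr ⟨hR, hRn⟩, ?_⟩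
    · rw [Finset.mem_Icc] at hi
      rw [entry_gzBump (lam := lam) x _ hk₀ (by omega) (by omega)]
      split_ifs <;> norm_num
    · rw [entry_gzBump (lam := lam) x _ hk₀ (by omega) (by omega), if_pos ⟨by omega, rfl⟩]
      exact one_pos
  intro h
  have hcoord := congrFun h ⟨k₀ - 1, by omega⟩
  simp only [Phi, Pi.zero_apply] at hcoord
  rw [if_neg (by omega), Nat.sub_add_cancel hk₀, hbelow] at hcoord
  linarith

theorem entry_eq_or_of_mem_extremePoints {r : ℕ → ℕ} (hr : r ∈ calF n) {x : GZpos n → ℝ}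
    (hx : x ∈ Fface n lam r)
    (hext : Phi n lam x ∈ (Phi n lam '' Fface n lam r).extremePoints ℝ) {k : ℕ} (hk : 1 ≤ k)
    (hkn : k ≤ n - 1) :
    entry n lam x (r k) (r k + k) = entry n lam x (r k) (r k + k - 1) ∨
      entry n lam x (r k) (r k + k) = entry n lam x (r k + 1) (r k + k) := by
  obtain ⟨hR, hRn⟩ := hr.1 k hk hkn
  set R := r k
  set v₀ := entry n lam x R (R + k)
  by_contra! hne
  obtain ⟨hright, hdown⟩ := hx.1 R (R + k - 1) (by omega) (by omega) (by omega)
  rw [show R + k - 1 + 1 = R + k by omega] at hright hdown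
  have hoff : ∀ i, 0 < i → i + (k - 1) ≤ n → entry n lam x i (i + (k - 1)) ≠ v₀ := by
    refine fun i hi hin => entry_diag_ne_of_lt_of_lt hx.1 (R := R) (by omega) ?_ ?_ hi hin
    · rw [show R + 1 + (k - 1) = R + k by omega]
      exact lt_of_le_of_ne hdown hne.2.symm
    · rw [show R + (k - 1) = R + k - 1 by omega]
      exact lt_of_le_of_ne hright hne.1
  set V := Set.range fun p : Fin (n + 1) × Fin (n + 1) => entry n lam x p.1 p.2
  have hV : ∀ i j, 0 < i → i ≤ j → j ≤ n → entry n lam x i j ∈ V :=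
    fun i j _ _ hj => ⟨(⟨i, by omega⟩, ⟨j, by omega⟩), rfl⟩
  obtain ⟨δ, hδ, hgap⟩ := exists_pos_le_abs_sub_of_finite (V := V) (Set.finite_range _) v₀
  have hmem : ∀ t, |t| ≤ δ → x + t • gzBump x k v₀ ∈ Fface n lam r := fun t ht =>
    mem_Fface_of_monotoneOn hr hx hV (monotoneOn_ite_eq_add hgap ht)
      (fun i hi hin => if_neg (hoff i hi hin)) fun i j hi _ hjn => by
        rw [entry_add_smul, entry_gzBump (lam := lam) x v₀ hk hi hjn]
        split_ifs <;> simp_all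
  have hδabs : |δ| ≤ δ := (abs_of_pos hδ).le
  have hzero := eq_zero_of_mem_extremePoints_of_add_mem_of_sub_mem
    (w := δ • Phi n 0 (gzBump x k v₀)) hext
    (by rw [← Phi_add_smul]; exact ⟨_, hmem δ hδabs, rfl⟩)
    (by rw [sub_eq_add_neg, ← neg_smul, ← Phi_add_smul]
        exact ⟨_, hmem (-δ) (by rwa [abs_neg]), rfl⟩)
  exact Phi_gzBump_ne_zero hk hkn hR hRn ((smul_eq_zero.mp hzero).resolve_left hδ.ne')

def gzDiag (n : ℕ) (lam : ℕ → ℝ) (x : GZpos n → ℝ) (k : ℕ) : List ℝ :=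
  List.ofFn fun i : Fin (n - k) => entry n lam x (i + 1) (i + 1 + k)

theorem length_gzDiag (x : GZpos n → ℝ) (k : ℕ) : (gzDiag n lam x k).length = n - k :=
  List.length_ofFn

theorem gzDiag_zero (x : GZpos n → ℝ) :
    gzDiag n lam x 0 = List.ofFn fun i : Fin n => lam (i + 1) := by
  simp only [gzDiag]
  congr
  funext i
  exact dif_neg (by omega)

theorem gzDiag_self (x : GZpos n → ℝ) : gzDiag n lam x n = [] := by
  simp [gzDiag]

theorem yco_eq_sum_gzDiag (x : GZpos n → ℝ) (k : ℕ) :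
    yco n lam x k = (gzDiag n lam x k).sum := by
  rw [gzDiag, List.sum_ofFn,
    Fin.sum_univ_eq_sum_range (fun i => entry n lam x (i + 1) (i + 1 + k)), yco,
    Finset.range_eq_Ico, Finset.sum_Ico_add' (fun i => entry n lam x i (i + k)), zero_add,
    Finset.Ico_add_one_right_eq_Icc]

-- The last coordinate `y_{n-1}` fits the pattern because `y_n` is an empty sum.
theorem Phi_apply (x : GZpos n → ℝ) (m : Fin n) :
    Phi n lam x m = yco n lam x m - yco n lam x (m + 1) := by
  rw [Phi]
  split_ifs with h
  · simp [yco, h, Nat.sub_add_cancel (show 1 ≤ n by omega)]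
  · rfl

theorem exists_gzDiag_succ_eq_eraseIdx_of_entry_eq_or {r : ℕ → ℕ} (hr : r ∈ calF n)
    {x : GZpos n → ℝ} (hx : x ∈ Fface n lam r) {k : ℕ} (hk : k + 1 ≤ n - 1)
    (hpinned : entry n lam x (r (k + 1)) (r (k + 1) + (k + 1)) =
        entry n lam x (r (k + 1)) (r (k + 1) + (k + 1) - 1) ∨
      entry n lam x (r (k + 1)) (r (k + 1) + (k + 1)) =
        entry n lam x (r (k + 1) + 1) (r (k + 1) + (k + 1))) :
    ∃ q < n - k, gzDiag n lam x (k + 1) = (gzDiag n lam x k).eraseIdx q := by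
  obtain ⟨hR, hRn⟩ := hr.1 (k + 1) (by omega) hk
  obtain ⟨hleft, hright⟩ := hx.2 (k + 1) (by omega) hk
  set R := r (k + 1)
  have of_pointwise : ∀ q < n - k, (∀ i < n - (k + 1),
      entry n lam x (i + 1) (i + 1 + (k + 1)) = if i < q then entry n lam x (i + 1) (i + 1 + k)
        else entry n lam x (i + 1 + 1) (i + 1 + 1 + k)) →
      ∃ q < n - k, gzDiag n lam x (k + 1) = (gzDiag n lam x k).eraseIdx q :=
    fun q hq h => ⟨q, hq, ofFn_eq_eraseIdx_ofFn _ _ (by omega) hq h⟩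
  rcases hpinned with htop | hbot
  · refine of_pointwise R (by omega) fun i hi => ?_
    split_ifs with hiR
    · rcases (show i + 1 < R ∨ i + 1 = R by omega) with hlt | heq
      · convert hleft (i + 1) (by omega) hlt using 2 <;> omega
      · convert htop using 2 <;> omega
    · convert hright (i + 1) (by omega) (by omega) using 2 <;> omega
  · refine of_pointwise (R - 1) (by omega) fun i hi => ?_
    split_ifs with hiR
    · convert hleft (i + 1) (by omega) (by omega) using 2 <;> omega
    · rcases (show R < i + 1 ∨ i + 1 = R by omega) with hlt | heq
      · convert hright (i + 1) hlt (by omega) using 2 <;> omega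
      · convert hbot using 2 <;> omega

theorem exists_gzDiag_succ_eq_eraseIdx {r : ℕ → ℕ} (hr : r ∈ calF n) {x : GZpos n → ℝ}
    (hx : x ∈ Fface n lam r)
    (hext : Phi n lam x ∈ (Phi n lam '' Fface n lam r).extremePoints ℝ) {k : ℕ} (hk : k < n) :
    ∃ q < (gzDiag n lam x k).length, gzDiag n lam x (k + 1) = (gzDiag n lam x k).eraseIdx q := by
  rw [length_gzDiag]
  rcases (show k + 1 = n ∨ k + 1 ≤ n - 1 by omega) with hlast | hk'
  · exact ⟨0, by omega, ofFn_eq_eraseIdx_ofFn (m := n - k) (m' := n - (k + 1))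
      (fun i => entry n lam x (i + 1) (i + 1 + k))
      (fun i => entry n lam x (i + 1) (i + 1 + (k + 1)))
      (by omega) (by omega) fun i hi => by omega⟩
  · exact exists_gzDiag_succ_eq_eraseIdx_of_entry_eq_or hr hx hk'
      (entry_eq_or_of_mem_extremePoints hr hx hext (by omega) hk')

end GelfandZetlin

theorem stmt_12_general (n : ℕ) (lam : ℕ → ℝ) :
    ∀ r ∈ calF n, ∀ v ∈ Set.extremePoints ℝ (Phi n lam '' Fface n lam r),
      ∃ σ : Equiv.Perm (Fin n), v = fun i => lam ((σ i : ℕ) + 1) := by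
  intro r hr v hv
  obtain ⟨x, hx, rfl⟩ := hv.1
  have hperm := ofFn_sum_sub_append_perm (gzDiag n lam x)
    (fun k hk => exists_gzDiag_succ_eq_eraseIdx hr hx hv hk) n le_rfl
  have hPhi : (fun m : Fin n => (gzDiag n lam x m).sum - (gzDiag n lam x (m + 1)).sum) =
      Phi n lam x := by
    funext m
    rw [Phi_apply, yco_eq_sum_gzDiag, yco_eq_sum_gzDiag]
  rw [hPhi, gzDiag_self, List.append_nil, gzDiag_zero] at hperm
  exact exists_perm_eq_comp_of_ofFn_perm hperm

/-- every extreme point of `Φ(F(r))` is a vertex of the permutohedron, i.e. of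
the form `(λ_{σ(1)}, …, λ_{σ(n)})` for some permutation `σ`. -/
theorem stmt_12 (n : ℕ) (hn : 2 ≤ n) (lam : ℕ → ℝ)
    (hlam : ∀ i, 1 ≤ i → i < n → lam (i + 1) < lam i) :
    ∀ r ∈ calF n, ∀ v ∈ Set.extremePoints ℝ (Phi n lam '' Fface n lam r),
      ∃ σ : Equiv.Perm (Fin n), v = fun i => lam ((σ i : ℕ) + 1) :=
  stmt_12_general n lam
end

section
/- For every r ∈ F_n, the face F(r) of GZ(λ) is a nonempty compact convex polytope whose affine hull has dimension n-1, and F(r) has exactly 2^{n-1} extreme points. -/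
/-!
On `F(r)` every entry of the diagonal `x_{i,i+d}` is a copy of an entry of diagonal `d - 1`,
except the one in row `r_d`, which is a free parameter `t_d`. Hence `F(r)` is an affine,
injective image of a polytope `P ⊆ ℝ^{n-1}` built as a tower: `t_d` ranges over an interval whose
ends are two neighbouring entries of diagonal `d - 1`, i.e. affine functions of `t_1, …, t_{d-1}`,
and the lower end is strictly smaller because `λ` is strictly decreasing. The extreme points of
the region between the graphs of two affine functions `f < g` over a convex set `S` are the
points `(v, f v)` and `(v, g v)` with `v` extreme in `S`, and the region has one dimension more
than `S`. So each of the `n - 1` steps doubles the number of vertices and raises the dimension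
by one.
-/

open MeasureTheory

open Set

section ClosedRegionBetween

variable {E : Type*}

-- Unlike Mathlib's `regionBetween`, the fibres are closed intervals.
def closedRegionBetween (f g : E → ℝ) (s : Set E) : Set (E × ℝ) :=
  {p | p.1 ∈ s ∧ p.2 ∈ Icc (f p.1) (g p.1)}

theorem fiber_subset_closedRegionBetween {f g : E → ℝ} {s : Set E} {x : E} (hx : x ∈ s) :
    {x} ×ˢ Icc (f x) (g x) ⊆ closedRegionBetween f g s := by
  rintro ⟨y, a⟩ ⟨rfl, ha⟩
  exact ⟨hx, ha⟩

end ClosedRegionBetween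

section Convexity

variable {E F : Type*} [AddCommGroup E] [Module ℝ E] [AddCommGroup F] [Module ℝ F]

theorem AffineMap.extremePoints_image_of_injOn (f : E →ᵃ[ℝ] F) {s : Set E} (hs : Convex ℝ s)
    (hf : InjOn f s) : extremePoints ℝ (f '' s) = f '' extremePoints ℝ s := by
  apply Subset.antisymm
  · rintro _ ⟨⟨x, hx, rfl⟩, hext⟩
    refine ⟨x, ⟨hx, fun x₁ hx₁ x₂ hx₂ hseg => ?_⟩, rfl⟩
    have := hext (mem_image_of_mem f hx₁) (mem_image_of_mem f hx₂)
      (image_openSegment ℝ f x₁ x₂ ▸ mem_image_of_mem f hseg)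
    exact hf hx₁ hx this
  · rintro _ ⟨x, ⟨hx, hext⟩, rfl⟩
    refine ⟨mem_image_of_mem f hx, ?_⟩
    rintro _ ⟨x₁, hx₁, rfl⟩ _ ⟨x₂, hx₂, rfl⟩ hseg
    rw [← image_openSegment] at hseg
    obtain ⟨z, hz, hfz⟩ := hseg
    obtain rfl := hf (hs.openSegment_subset hx₁ hx₂ hz) hx hfz
    rw [hext hx₁ hx₂ hz]

theorem isExtreme_fiber_closedRegionBetween {f g : E → ℝ} {s : Set E} {x : E}
    (hx : x ∈ extremePoints ℝ s) :
    IsExtreme ℝ (closedRegionBetween f g s) ({x} ×ˢ Icc (f x) (g x)) := by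
  refine ⟨fiber_subset_closedRegionBetween hx.1, ?_⟩
  rintro ⟨x₁, a₁⟩ hp₁ ⟨x₂, a₂⟩ hp₂ z ⟨hz₁, -⟩ ⟨μ, ν, hμ, hν, hμν, rfl⟩
  obtain rfl : x₁ = x := hx.2 hp₁.1 hp₂.1 ⟨μ, ν, hμ, hν, hμν, hz₁⟩
  exact ⟨rfl, hp₁.2⟩

variable {f g : E →ᵃ[ℝ] ℝ} {s : Set E}

theorem Convex.closedRegionBetween (hs : Convex ℝ s) :
    Convex ℝ (closedRegionBetween f g s) := by
  rintro ⟨x, a⟩ ⟨hx, hfa, hag⟩ ⟨y, b⟩ ⟨hy, hfb, hbg⟩ μ ν hμ hν hμν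
  refine ⟨hs hx hy hμ hν hμν, ?_, ?_⟩ <;>
    simp only [Prod.smul_mk, Prod.mk_add_mk, smul_eq_mul, Convex.combo_affine_apply hμν]
  · exact add_le_add (mul_le_mul_of_nonneg_left hfa hμ) (mul_le_mul_of_nonneg_left hfb hν)
  · exact add_le_add (mul_le_mul_of_nonneg_left hag hμ) (mul_le_mul_of_nonneg_left hbg hν)

theorem mem_extremePoints_of_graph_mem_extremePoints (h : E →ᵃ[ℝ] ℝ)
    (hh : ∀ y ∈ s, h y ∈ Icc (f y) (g y)) {x : E}
    (hx : (x, h x) ∈ extremePoints ℝ (closedRegionBetween f g s)) :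
    x ∈ extremePoints ℝ s := by
  refine ⟨hx.1.1, fun x₁ hx₁ x₂ hx₂ hseg => ?_⟩
  obtain ⟨μ, ν, hμ, hν, hμν, rfl⟩ := hseg
  have hgraph : (μ • x₁ + ν • x₂, h (μ • x₁ + ν • x₂)) ∈
      openSegment ℝ (x₁, h x₁) (x₂, h x₂) :=
    ⟨μ, ν, hμ, hν, hμν, by ext <;> simp [Convex.combo_affine_apply hμν]⟩
  exact congrArg Prod.fst (hx.2 ⟨hx₁, hh x₁ hx₁⟩ ⟨hx₂, hh x₂ hx₂⟩ hgraph)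

theorem extremePoints_closedRegionBetween (hfg : ∀ x ∈ s, f x ≤ g x) :
    extremePoints ℝ (closedRegionBetween f g s) =
      (fun x => (x, f x)) '' extremePoints ℝ s ∪ (fun x => (x, g x)) '' extremePoints ℝ s := by
  have extremePoints_fiber : ∀ x ∈ s,
      extremePoints ℝ ({x} ×ˢ Icc (f x) (g x)) = {x} ×ˢ {f x, g x} := fun x hx => by
    rw [extremePoints_prod, extremePoints_singleton, extremePoints_Icc (hfg x hx)]
  apply Subset.antisymm
  · rintro ⟨x, a⟩ hp
    have hx : x ∈ s := hp.1.1
    have hfiber : (x, a) ∈ {x} ×ˢ Icc (f x) (g x) := ⟨rfl, hp.1.2⟩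
    have ha : a = f x ∨ a = g x := by
      have := inter_extremePoints_subset_extremePoints_of_subset
        (fiber_subset_closedRegionBetween hx) ⟨hfiber, hp⟩
      rw [extremePoints_fiber x hx] at this
      exact this.2
    rcases ha with rfl | rfl
    · exact Or.inl ⟨x, mem_extremePoints_of_graph_mem_extremePoints f
        (fun y hy => ⟨le_rfl, hfg y hy⟩) hp, rfl⟩
    · exact Or.inr ⟨x, mem_extremePoints_of_graph_mem_extremePoints g
        (fun y hy => ⟨hfg y hy, le_rfl⟩) hp, rfl⟩
  · have endpoint_mem : ∀ x ∈ extremePoints ℝ s, ∀ a ∈ ({f x, g x} : Set ℝ),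
        (x, a) ∈ extremePoints ℝ (closedRegionBetween f g s) := fun x hx a ha => by
      have := (isExtreme_fiber_closedRegionBetween (f := f) (g := g) hx).extremePoints_eq
      rw [extremePoints_fiber x hx.1] at this
      exact (this.le (show (x, a) ∈ {x} ×ˢ {f x, g x} from ⟨rfl, ha⟩)).2
    rintro _ (⟨x, hx, rfl⟩ | ⟨x, hx, rfl⟩)
    · exact endpoint_mem x hx _ (Or.inl rfl)
    · exact endpoint_mem x hx _ (Or.inr rfl)

theorem ncard_extremePoints_closedRegionBetween (hfg : ∀ x ∈ s, f x < g x)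
    (hfin : (extremePoints ℝ s).Finite) :
    (extremePoints ℝ (closedRegionBetween f g s)).ncard = 2 * (extremePoints ℝ s).ncard := by
  have graph_injective : ∀ h : E → ℝ, Function.Injective fun x => (x, h x) :=
    fun h x y hxy => congrArg Prod.fst hxy
  have hdisj : Disjoint ((fun x => (x, f x)) '' extremePoints ℝ s)
      ((fun x => (x, g x)) '' extremePoints ℝ s) := by
    rw [disjoint_left]
    rintro _ ⟨x, hx, rfl⟩ ⟨y, -, hyx⟩
    obtain ⟨rfl, hgf⟩ := Prod.mk.inj hyx
    exact (hfg y hx.1).ne' hgf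
  rw [extremePoints_closedRegionBetween fun x hx => (hfg x hx).le,
    ncard_union_eq hdisj (hfin.image _) (hfin.image _),
    ncard_image_of_injective _ (graph_injective f), ncard_image_of_injective _ (graph_injective g)]
  ring

theorem prod_top_le_vectorSpan_closedRegionBetween (hfg : ∀ x ∈ s, f x ≤ g x) {x₀ : E}
    (hx₀ : x₀ ∈ s) (hlt : f x₀ < g x₀) :
    (vectorSpan ℝ s).prod ⊤ ≤ vectorSpan ℝ (closedRegionBetween f g s) := by
  set V := vectorSpan ℝ (closedRegionBetween f g s)
  have graph_mem : ∀ x ∈ s, (x, f x) ∈ closedRegionBetween f g s :=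
    fun x hx => ⟨hx, le_rfl, hfg x hx⟩
  have vertical : ((0 : E), (1 : ℝ)) ∈ V := by
    have h := V.smul_mem (g x₀ - f x₀)⁻¹
      (vsub_mem_vectorSpan ℝ (show (x₀, g x₀) ∈ closedRegionBetween f g s from
        ⟨hx₀, hfg x₀ hx₀, le_rfl⟩) (graph_mem x₀ hx₀))
    convert h using 1
    ext
    · simp
    · simp [inv_mul_cancel₀ (sub_pos.2 hlt).ne']
  have horizontal : vectorSpan ℝ s ≤ V.comap (LinearMap.inl ℝ E ℝ) := by
    rw [vectorSpan_def, Submodule.span_le]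
    rintro _ ⟨x, hx, y, hy, rfl⟩
    have h := V.sub_mem (vsub_mem_vectorSpan ℝ (graph_mem x hx) (graph_mem y hy))
      (V.smul_mem (f x - f y) vertical)
    rw [SetLike.mem_coe, Submodule.mem_comap]
    convert h using 1
    ext <;> simp
  rintro ⟨v, a⟩ ⟨hv, -⟩
  have hva : (v, a) = LinearMap.inl ℝ E ℝ v + a • ((0 : E), (1 : ℝ)) := by ext <;> simp
  rw [hva]
  exact V.add_mem (horizontal hv) (V.smul_mem a vertical)

end Convexity

section GelfandZetlin

variable {n : ℕ} {lam : ℕ → ℝ}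

theorem entry_self (x : GZpos n → ℝ) (i : ℕ) : entry n lam x i i = lam i :=
  dif_neg fun h => (lt_irrefl i) h.2.1

theorem entry_coe (x : GZpos n → ℝ) (p : GZpos n) : entry n lam x p.1.1 p.1.2 = x p :=
  dif_pos ⟨p.2.1, p.2.2, Nat.lt_succ_iff.1 p.1.2.2⟩

theorem continuous_entry (i j : ℕ) : Continuous fun x : GZpos n → ℝ => entry n lam x i j := by
  unfold entry
  split_ifs
  · exact continuous_apply _
  · exact continuous_const

theorem isClosed_GZ : IsClosed (GZ n lam) := by
  simp only [GZ, ofPred_forall, ofPred_and]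
  exact isClosed_iInter fun i => isClosed_iInter fun j => isClosed_iInter fun _ =>
    isClosed_iInter fun _ => isClosed_iInter fun _ =>
      (isClosed_le (continuous_entry _ _) (continuous_entry _ _)).inter
        (isClosed_le (continuous_entry _ _) (continuous_entry _ _))

theorem isClosed_Fface (r : ℕ → ℕ) : IsClosed (Fface n lam r) := by
  refine isClosed_GZ.inter (s₂ := {x | ∀ j, 1 ≤ j → j ≤ n - 1 → _}) ?_
  simp only [ofPred_forall, ofPred_and]
  refine (isClosed_iInter fun j => isClosed_iInter fun _ =>
    isClosed_iInter fun _ => IsClosed.inter ?_ ?_) <;>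
  exact isClosed_iInter fun i => isClosed_iInter fun _ => isClosed_iInter fun _ =>
    isClosed_eq (continuous_entry _ _) (continuous_entry _ _)

theorem entry_mem_Icc_of_mem_GZ {x : GZpos n → ℝ} (hx : x ∈ GZ n lam) {i k : ℕ} (hi : 1 ≤ i)
    (hik : i + k ≤ n) : entry n lam x i (i + k) ∈ Icc (lam (i + k)) (lam i) := by
  induction k generalizing i with
  | zero => simp [entry_self]
  | succ k ih =>
    obtain ⟨hrow, hcol⟩ := hx i (i + k) hi (by omega) (by omega)
    have hbelow := ih (i := i + 1) (by omega) (by omega)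
    rw [show i + 1 + k = i + (k + 1) by omega] at hbelow
    exact ⟨hbelow.1.trans hcol, hrow.trans (ih hi (by omega)).2⟩

theorem GZ_subset_pi : GZ n lam ⊆ univ.pi fun p : GZpos n => Icc (lam p.1.2) (lam p.1.1) := by
  intro x hx p _
  have hp := p.2
  have hpn := p.1.2.2
  have h := entry_mem_Icc_of_mem_GZ hx (k := p.1.2 - p.1.1) (i := p.1.1) (by omega) (by omega)
  rwa [Nat.add_sub_cancel' hp.2.le, entry_coe] at h

theorem isCompact_GZ : IsCompact (GZ n lam) :=
  (isCompact_univ_pi fun _ => isCompact_Icc).of_isClosed_subset isClosed_GZ GZ_subset_pi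

end GelfandZetlin

section FaceParametrization

/-- On `F(r)` the entry `x_{i,i+d}` equals `λ_k` (`inl k`) or the free parameter
`t_e = x_{r_e, r_e+e}` of a diagonal `e ≤ d` (`inr e`): the defining equalities copy each entry of
diagonal `d + 1` from diagonal `d`, except at row `r_{d+1}`. -/
def faceSource (r : ℕ → ℕ) : ℕ → ℕ → ℕ ⊕ ℕ
  | i, 0 => .inl i
  | i, d + 1 =>
    if i < r (d + 1) then faceSource r i d
    else if i = r (d + 1) then .inr (d + 1) else faceSource r (i + 1) d

def sourceValue (lam : ℕ → ℝ) : ℕ ⊕ ℕ → (ℕ → ℝ) →ᵃ[ℝ] ℝ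
  | .inl k => AffineMap.const ℝ (ℕ → ℝ) (lam k)
  | .inr e => (LinearMap.proj e : (ℕ → ℝ) →ₗ[ℝ] ℝ).toAffineMap

def faceEntry (lam : ℕ → ℝ) (r : ℕ → ℕ) (i d : ℕ) : (ℕ → ℝ) →ᵃ[ℝ] ℝ :=
  sourceValue lam (faceSource r i d)

variable {lam : ℕ → ℝ} {r : ℕ → ℕ} {i d m : ℕ} {t t' : ℕ → ℝ}

@[simp]
theorem faceEntry_zero : faceEntry lam r i 0 t = lam i := rfl

theorem faceEntry_succ_of_lt (h : i < r (d + 1)) :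
    faceEntry lam r i (d + 1) = faceEntry lam r i d := by
  simp [faceEntry, faceSource, h]

theorem faceEntry_succ_of_gt (h : r (d + 1) < i) :
    faceEntry lam r i (d + 1) = faceEntry lam r (i + 1) d := by
  simp [faceEntry, faceSource, h.not_gt, h.ne']

theorem faceEntry_free (hd : 1 ≤ d) :
    faceEntry lam r (r d) d = (LinearMap.proj d : (ℕ → ℝ) →ₗ[ℝ] ℝ).toAffineMap := by
  obtain ⟨e, rfl⟩ := Nat.exists_eq_add_of_le' hd
  simp [faceEntry, faceSource, sourceValue]

theorem faceEntry_free_apply (hd : 1 ≤ d) : faceEntry lam r (r d) d t = t d := by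
  rw [faceEntry_free hd]
  rfl

theorem mem_Icc_of_faceSource_eq_inr {e : ℕ} (h : faceSource r i d = .inr e) : e ∈ Icc 1 d := by
  induction d generalizing i with
  | zero => simp [faceSource] at h
  | succ d ih =>
    simp only [faceSource] at h
    split_ifs at h with h₁ h₂
    · exact Icc_subset_Icc_right d.le_succ (ih h)
    · cases h
      exact ⟨d.succ_pos, le_rfl⟩
    · exact Icc_subset_Icc_right d.le_succ (ih h)

theorem faceEntry_congr (h : ∀ e ∈ Icc 1 d, t e = t' e) :
    faceEntry lam r i d t = faceEntry lam r i d t' := by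
  unfold faceEntry
  cases hs : faceSource r i d with
  | inl k => rfl
  | inr e => exact h e (mem_Icc_of_faceSource_eq_inr hs)

theorem faceEntry_add_smul_single (hd : d ≤ m) (a : ℝ) :
    faceEntry lam r i d (t + a • Pi.single (m + 1) 1) = faceEntry lam r i d t :=
  faceEntry_congr fun e he => by simp [show e ≠ m + 1 by grind]

/-- The parameters `t_d = x_{r_d, r_d+d}` of the first `m` diagonals of a point of `F(r)`
(all other coordinates vanish); the GZ inequalities reduce to `t_{d+1}` lying between its two
neighbours on diagonal `d`. -/
def paramPolytope (lam : ℕ → ℝ) (r : ℕ → ℕ) (m : ℕ) : Set (ℕ → ℝ) :=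
  {t | (∀ d ∉ Icc 1 m, t d = 0) ∧
    ∀ d < m, t (d + 1) ∈
      Icc (faceEntry lam r (r (d + 1) + 1) d t) (faceEntry lam r (r (d + 1)) d t)}

theorem paramPolytope_zero : paramPolytope lam r 0 = {0} := by
  ext t
  refine ⟨fun ht => funext fun d => ht.1 d (by simp), ?_⟩
  rintro rfl
  exact ⟨fun _ _ => rfl, fun d hd => absurd hd d.not_lt_zero⟩

theorem add_smul_single_mem_paramPolytope_succ_iff (ht : t (m + 1) = 0) {a : ℝ} :
    t + a • Pi.single (m + 1) 1 ∈ paramPolytope lam r (m + 1) ↔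
      t ∈ paramPolytope lam r m ∧
        a ∈ Icc (faceEntry lam r (r (m + 1) + 1) m t) (faceEntry lam r (r (m + 1)) m t) := by
  have coord_ne : ∀ e ≠ m + 1, (t + a • Pi.single (m + 1) 1 : ℕ → ℝ) e = t e := fun e he => by
    simp [he]
  have coord_eq : (t + a • Pi.single (m + 1) 1 : ℕ → ℝ) (m + 1) = a := by simp [ht]
  simp only [paramPolytope, mem_ofPred_eq]
  constructor
  · rintro ⟨hsupp, hcon⟩
    refine ⟨⟨fun d hd => ?_, fun d hd => ?_⟩, ?_⟩
    · by_cases hdm : d = m + 1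
      · rwa [hdm]
      · rw [← coord_ne d hdm]
        exact hsupp d fun h => hd ⟨h.1, by grind⟩
    · have := hcon d (by omega)
      rwa [coord_ne _ (by omega), faceEntry_add_smul_single (m := m) (by omega),
        faceEntry_add_smul_single (m := m) (by omega)] at this
    · have := hcon m (by omega)
      rwa [coord_eq, faceEntry_add_smul_single le_rfl, faceEntry_add_smul_single le_rfl] at this
  · rintro ⟨⟨hsupp, hcon⟩, ha⟩
    refine ⟨fun d hd => ?_, fun d hd => ?_⟩
    · rw [coord_ne d (fun h => hd ⟨by omega, h.le⟩)]
      exact hsupp d fun h => hd ⟨h.1, by grind⟩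
    · rw [faceEntry_add_smul_single (m := m) (by omega),
        faceEntry_add_smul_single (m := m) (by omega)]
      rcases Nat.lt_succ_iff_lt_or_eq.1 hd with hd | rfl
      · rw [coord_ne _ (by omega)]
        exact hcon d hd
      · rwa [coord_eq]

end FaceParametrization

section ParamPolytope

variable {n : ℕ} {lam : ℕ → ℝ} {r : ℕ → ℕ} {m : ℕ} {t : ℕ → ℝ}

theorem faceEntry_succ_lt (hlam : ∀ i, 1 ≤ i → i < n → lam (i + 1) < lam i)
    (ht : t ∈ paramPolytope lam r m) {d i : ℕ} (hdm : d ≤ m) (hi : 1 ≤ i) (hin : i + 1 + d ≤ n) :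
    faceEntry lam r (i + 1) d t < faceEntry lam r i d t := by
  induction d generalizing i with
  | zero => exact hlam i hi (by omega)
  | succ d ih =>
    obtain ⟨hlo, hhi⟩ := ht.2 d (by omega)
    rcases lt_trichotomy (i + 1) (r (d + 1)) with hc | hc | hc
    · rw [faceEntry_succ_of_lt hc, faceEntry_succ_of_lt (by omega : i < r (d + 1))]
      exact ih (by omega) hi (by omega)
    · rw [faceEntry_succ_of_lt (by omega : i < r (d + 1)), hc, faceEntry_free_apply d.succ_pos]
      exact hhi.trans_lt (hc ▸ ih (by omega) hi (by omega))
    · rw [faceEntry_succ_of_gt hc]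
      rcases (show r (d + 1) < i ∨ i = r (d + 1) by omega) with hc' | rfl
      · rw [faceEntry_succ_of_gt hc']
        exact ih (by omega) (by omega) (by omega)
      · rw [faceEntry_free_apply d.succ_pos]
        exact (ih (i := r (d + 1) + 1) (by omega) (by omega) (by omega)).trans_le hlo

theorem faceEntry_interlace (hlam : ∀ i, 1 ≤ i → i < n → lam (i + 1) < lam i)
    (ht : t ∈ paramPolytope lam r m) {i d : ℕ} (hdm : d < m) (hi : 1 ≤ i)
    (hin : i + (d + 1) ≤ n) :
    faceEntry lam r i (d + 1) t ≤ faceEntry lam r i d t ∧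
      faceEntry lam r (i + 1) d t ≤ faceEntry lam r i (d + 1) t := by
  rcases lt_trichotomy i (r (d + 1)) with hc | rfl | hc
  · rw [faceEntry_succ_of_lt hc]
    exact ⟨le_rfl, (faceEntry_succ_lt hlam ht hdm.le hi (by omega)).le⟩
  · rw [faceEntry_free_apply d.succ_pos]
    exact ⟨(ht.2 d hdm).2, (ht.2 d hdm).1⟩
  · rw [faceEntry_succ_of_gt hc]
    exact ⟨(faceEntry_succ_lt hlam ht hdm.le hi (by omega)).le, le_rfl⟩

def insertCoord (k : ℕ) : (ℕ → ℝ) × ℝ →ₗ[ℝ] ℕ → ℝ :=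
  LinearMap.fst ℝ _ _ + (LinearMap.snd ℝ _ _).smulRight (Pi.single k 1)

theorem insertCoord_apply (k : ℕ) (p : (ℕ → ℝ) × ℝ) :
    insertCoord k p = p.1 + p.2 • Pi.single k 1 := rfl

theorem insertCoord_injOn (k : ℕ) : InjOn (insertCoord k) {p | p.1 k = 0} := by
  rintro ⟨t, a⟩ (ht : t k = 0) ⟨t', a'⟩ (ht' : t' k = 0) h
  simp only [insertCoord_apply] at h
  have ha : a = a' := by simpa [ht, ht'] using congrFun h k
  subst ha
  simpa using h

theorem paramPolytope_succ :
    paramPolytope lam r (m + 1) = insertCoord (m + 1) ''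
      closedRegionBetween (faceEntry lam r (r (m + 1) + 1) m) (faceEntry lam r (r (m + 1)) m)
        (paramPolytope lam r m) := by
  ext u
  constructor
  · intro hu
    set t := u + (-u (m + 1)) • Pi.single (m + 1) 1
    have ht0 : t (m + 1) = 0 := by simp [t]
    have hut : u = t + u (m + 1) • Pi.single (m + 1) 1 := by simp [t]
    rw [hut, add_smul_single_mem_paramPolytope_succ_iff ht0] at hu
    exact ⟨(t, u (m + 1)), hu, hut.symm⟩
  · rintro ⟨⟨t, a⟩, ⟨ht, ha⟩, rfl⟩
    exact (add_smul_single_mem_paramPolytope_succ_iff (ht.1 (m + 1) (by simp))).2 ⟨ht, ha⟩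

theorem closedRegionBetween_paramPolytope_subset :
    closedRegionBetween (faceEntry lam r (r (m + 1) + 1) m) (faceEntry lam r (r (m + 1)) m)
      (paramPolytope lam r m) ⊆ {p | p.1 (m + 1) = 0} :=
  fun p hp => hp.1.1 (m + 1) (by simp)

theorem convex_paramPolytope : ∀ m, Convex ℝ (paramPolytope lam r m)
  | 0 => paramPolytope_zero ▸ convex_singleton 0
  | m + 1 => paramPolytope_succ ▸ (convex_paramPolytope m).closedRegionBetween.linear_image _

theorem faceEntry_lt_faceEntry_of_mem (hlam : ∀ i, 1 ≤ i → i < n → lam (i + 1) < lam i)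
    (hr : ∀ j, 1 ≤ j → j ≤ n - 1 → 1 ≤ r j ∧ r j ≤ n - j) (hm : m + 1 ≤ n - 1)
    (ht : t ∈ paramPolytope lam r m) :
    faceEntry lam r (r (m + 1) + 1) m t < faceEntry lam r (r (m + 1)) m t := by
  have := hr (m + 1) (by omega) hm
  exact faceEntry_succ_lt hlam ht le_rfl this.1 (by omega)

theorem ncard_extremePoints_paramPolytope (hlam : ∀ i, 1 ≤ i → i < n → lam (i + 1) < lam i)
    (hr : ∀ j, 1 ≤ j → j ≤ n - 1 → 1 ≤ r j ∧ r j ≤ n - j)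
    (hm : m ≤ n - 1) : (extremePoints ℝ (paramPolytope lam r m)).ncard = 2 ^ m := by
  induction m with
  | zero => simp [paramPolytope_zero]
  | succ m ih =>
    have ih := ih (by omega)
    have hfin : (extremePoints ℝ (paramPolytope lam r m)).Finite :=
      finite_of_ncard_ne_zero (by rw [ih]; positivity)
    have hinj := (insertCoord_injOn (m + 1)).mono
      (closedRegionBetween_paramPolytope_subset (lam := lam) (r := r))
    rw [paramPolytope_succ, ← LinearMap.coe_toAffineMap,
      AffineMap.extremePoints_image_of_injOn _ (convex_paramPolytope m).closedRegionBetween hinj,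
      LinearMap.coe_toAffineMap, (hinj.mono extremePoints_subset).ncard_image,
      ncard_extremePoints_closedRegionBetween
        (fun _ ht => faceEntry_lt_faceEntry_of_mem hlam hr hm ht) hfin, ih, pow_succ, mul_comm]

theorem paramPolytope_nonempty (hlam : ∀ i, 1 ≤ i → i < n → lam (i + 1) < lam i)
    (hr : ∀ j, 1 ≤ j → j ≤ n - 1 → 1 ≤ r j ∧ r j ≤ n - j) (hm : m ≤ n - 1) :
    (paramPolytope lam r m).Nonempty :=
  have hcard := ncard_extremePoints_paramPolytope hlam hr hm
  (nonempty_of_ncard_ne_zero (by rw [hcard]; positivity)).mono extremePoints_subset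

theorem span_single_le_vectorSpan_paramPolytope
    (hlam : ∀ i, 1 ≤ i → i < n → lam (i + 1) < lam i)
    (hr : ∀ j, 1 ≤ j → j ≤ n - 1 → 1 ≤ r j ∧ r j ≤ n - j)
    (hm : m ≤ n - 1) :
    Submodule.span ℝ ((fun d => Pi.single d 1) '' Icc 1 m) ≤
      vectorSpan ℝ (paramPolytope lam r m) := by
  induction m with
  | zero => simp
  | succ m ih =>
    have ih := ih (by omega)
    have hlt : ∀ t ∈ paramPolytope lam r m, _ :=
      fun t ht => faceEntry_lt_faceEntry_of_mem hlam hr hm ht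
    obtain ⟨t₀, ht₀⟩ := paramPolytope_nonempty hlam hr (m := m) (by omega)
    have hregion := prod_top_le_vectorSpan_closedRegionBetween (fun t ht => (hlt t ht).le) ht₀
      (hlt t₀ ht₀)
    rw [paramPolytope_succ, ← LinearMap.coe_toAffineMap, ← AffineMap.map_vectorSpan,
      LinearMap.toAffineMap_linear, Submodule.span_le]
    rintro _ ⟨d, hd, rfl⟩
    rcases (show d ∈ Icc 1 m ∨ d = m + 1 by grind) with hd | rfl
    · exact ⟨(Pi.single d 1, 0), hregion ⟨ih (Submodule.subset_span ⟨d, hd, rfl⟩), trivial⟩,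
        by simp [insertCoord_apply]⟩
    · exact ⟨(0, 1), hregion ⟨zero_mem _, trivial⟩, by simp [insertCoord_apply]⟩

theorem vectorSpan_paramPolytope_le :
    vectorSpan ℝ (paramPolytope lam r m) ≤
      Submodule.span ℝ ((fun d => Pi.single d 1) '' Icc 1 m) := by
  rw [vectorSpan_def, Submodule.span_le]
  rintro _ ⟨t, ht, t', ht', rfl⟩
  have hsum : t -ᵥ t' = ∑ d ∈ Finset.Icc 1 m, (t d - t' d) • Pi.single d 1 := by
    ext e
    by_cases he : e ∈ Icc 1 m
    · simp [Finset.sum_apply, Pi.single_apply, he.1, he.2]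
    · simp [Finset.sum_apply, Pi.single_apply, ht.1 e he, ht'.1 e he]
  change t -ᵥ t' ∈ _
  rw [hsum]
  exact Submodule.sum_mem _ fun d hd =>
    Submodule.smul_mem _ _ (Submodule.subset_span ⟨d, by simpa using hd, rfl⟩)

end ParamPolytope

section Face

variable {n : ℕ} {lam : ℕ → ℝ} {r : ℕ → ℕ} {t : ℕ → ℝ} {x : GZpos n → ℝ}

def faceMap (n : ℕ) (lam : ℕ → ℝ) (r : ℕ → ℕ) : (ℕ → ℝ) →ᵃ[ℝ] (GZpos n → ℝ) :=
  AffineMap.pi fun p => faceEntry lam r p.1.1 (p.1.2 - p.1.1)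

theorem entry_faceMap {i j d : ℕ} (hi : 1 ≤ i) (hj : j ≤ n) (hij : i + d = j) :
    entry n lam (faceMap n lam r t) i j = faceEntry lam r i d t := by
  subst hij
  rcases Nat.eq_zero_or_pos d with rfl | hd
  · simp [entry_self]
  · rw [entry, dif_pos ⟨hi, by omega, hj⟩]
    simp [faceMap]

theorem faceMap_mem_Fface (hlam : ∀ i, 1 ≤ i → i < n → lam (i + 1) < lam i)
    (hr : ∀ j, 1 ≤ j → j ≤ n - 1 → 1 ≤ r j ∧ r j ≤ n - j)
    (ht : t ∈ paramPolytope lam r (n - 1)) : faceMap n lam r t ∈ Fface n lam r := by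
  refine ⟨fun i j hi hij hjn => ?_, fun j hj hjn => ?_⟩
  · obtain ⟨d, rfl⟩ := Nat.exists_eq_add_of_le hij
    rw [entry_faceMap (d := d + 1) hi hjn (by omega), entry_faceMap (d := d) hi (by omega) rfl,
      entry_faceMap (d := d) (i := i + 1) (by omega) hjn (by omega)]
    exact faceEntry_interlace hlam ht (by omega) hi (by omega)
  obtain ⟨e, rfl⟩ := Nat.exists_eq_add_of_le' hj
  have hre := hr (e + 1) hj hjn
  refine ⟨fun i hi hir => ?_, fun i hir hin => ?_⟩
  · rw [entry_faceMap (d := e + 1) hi (by omega) (by omega),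
      entry_faceMap (d := e) hi (by omega) (by omega), faceEntry_succ_of_lt hir]
  · rw [entry_faceMap (d := e + 1) (by omega) (by omega) (by omega),
      entry_faceMap (d := e) (i := i + 1) (by omega) (by omega) (by omega),
      faceEntry_succ_of_gt hir]

def faceCoords (n : ℕ) (lam : ℕ → ℝ) (r : ℕ → ℕ) (x : GZpos n → ℝ) : ℕ → ℝ :=
  fun d => if d ∈ Icc 1 (n - 1) then entry n lam x (r d) (r d + d) else 0

theorem entry_eq_faceEntry_faceCoords (hx : x ∈ Fface n lam r) {i d : ℕ} (hd : d ≤ n - 1)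
    (hi : 1 ≤ i) (hin : i + d ≤ n) :
    entry n lam x i (i + d) = faceEntry lam r i d (faceCoords n lam r x) := by
  induction d generalizing i with
  | zero => simp [entry_self]
  | succ d ih =>
    have hface := hx.2 (d + 1) (by omega) hd
    rcases lt_trichotomy i (r (d + 1)) with hc | rfl | hc
    · rw [faceEntry_succ_of_lt hc, ← ih (by omega) hi (by omega),
        show i + d = d + 1 + i - 1 by omega, show i + (d + 1) = d + 1 + i by omega]
      exact hface.1 i hi hc
    · rw [faceEntry_free_apply d.succ_pos, faceCoords, if_pos ⟨d.succ_pos, hd⟩]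
    · rw [faceEntry_succ_of_gt hc, ← ih (i := i + 1) (by omega) (by omega) (by omega),
        show i + 1 + d = d + 1 + i by omega, show i + (d + 1) = d + 1 + i by omega]
      exact hface.2 i hc (by omega)

theorem faceCoords_mem_paramPolytope (hr : ∀ j, 1 ≤ j → j ≤ n - 1 → 1 ≤ r j ∧ r j ≤ n - j)
    (hx : x ∈ Fface n lam r) : faceCoords n lam r x ∈ paramPolytope lam r (n - 1) := by
  refine ⟨fun d hd => if_neg hd, fun d hd => ?_⟩
  have hrd := hr (d + 1) (by omega) (by omega)
  obtain ⟨hrow, hcol⟩ := hx.1 (r (d + 1)) (r (d + 1) + d) hrd.1 (by omega) (by omega)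
  have htd : faceCoords n lam r x (d + 1) = entry n lam x (r (d + 1)) (r (d + 1) + d + 1) :=
    if_pos ⟨d.succ_pos, by omega⟩
  rw [htd, ← entry_eq_faceEntry_faceCoords hx (by omega) hrd.1 (by omega),
    show r (d + 1) + d + 1 = r (d + 1) + 1 + d by omega,
    ← entry_eq_faceEntry_faceCoords hx (i := r (d + 1) + 1) (by omega) (by omega) (by omega)]
  rw [show r (d + 1) + 1 + d = r (d + 1) + d + 1 by omega]
  exact ⟨hcol, hrow⟩

theorem faceMap_faceCoords (hx : x ∈ Fface n lam r) :
    faceMap n lam r (faceCoords n lam r x) = x := by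
  funext p
  obtain ⟨⟨i, j⟩, hi, hij⟩ := p
  dsimp only at hi hij
  have hj := j.2
  calc faceMap n lam r (faceCoords n lam r x) ⟨(i, j), hi, hij⟩
      = faceEntry lam r i (j - i) (faceCoords n lam r x) := rfl
    _ = entry n lam x i (i + (j - i)) :=
      (entry_eq_faceEntry_faceCoords hx (by omega) hi (by omega)).symm
    _ = x ⟨(i, j), hi, hij⟩ := by
      rw [Nat.add_sub_cancel' hij.le]
      exact entry_coe x ⟨(i, j), hi, hij⟩

theorem Fface_eq_image_faceMap (hlam : ∀ i, 1 ≤ i → i < n → lam (i + 1) < lam i)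
    (hr : ∀ j, 1 ≤ j → j ≤ n - 1 → 1 ≤ r j ∧ r j ≤ n - j) :
    Fface n lam r = faceMap n lam r '' paramPolytope lam r (n - 1) :=
  Subset.antisymm (fun _ hx => ⟨_, faceCoords_mem_paramPolytope hr hx, faceMap_faceCoords hx⟩)
    (image_subset_iff.2 fun _ ht => faceMap_mem_Fface hlam hr ht)

end Face

section Face

variable {n : ℕ} {lam : ℕ → ℝ} {r : ℕ → ℕ}

theorem faceMap_injOn (hr : ∀ j, 1 ≤ j → j ≤ n - 1 → 1 ≤ r j ∧ r j ≤ n - j) :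
    InjOn (faceMap n lam r) (paramPolytope lam r (n - 1)) := by
  intro t ht t' ht' h
  funext d
  by_cases hd : d ∈ Icc 1 (n - 1)
  · have hrd := hr d hd.1 hd.2
    calc t d = entry n lam (faceMap n lam r t) (r d) (r d + d) := by
          rw [entry_faceMap hrd.1 (by omega) rfl, faceEntry_free_apply hd.1]
      _ = t' d := by rw [h, entry_faceMap hrd.1 (by omega) rfl, faceEntry_free_apply hd.1]
  · rw [ht.1 d hd, ht'.1 d hd]

theorem linearIndependent_faceMap_linear_single
    (hr : ∀ j, 1 ≤ j → j ≤ n - 1 → 1 ≤ r j ∧ r j ≤ n - j) :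
    LinearIndependent ℝ fun d : Finset.Icc 1 (n - 1) =>
      (faceMap n lam r).linear (Pi.single (d : ℕ) 1) := by
  rw [Fintype.linearIndependent_iff]
  rintro g hg ⟨d, hd₀⟩
  have hd := Finset.mem_Icc.1 hd₀
  have hrd := hr d hd.1 hd.2
  let p : GZpos n := ⟨(⟨r d, by omega⟩, ⟨r d + d, by omega⟩), hrd.1, by simp; omega⟩
  have eval : ∀ k : ℕ, (faceMap n lam r).linear (Pi.single k 1) p = (Pi.single k 1 : ℕ → ℝ) d := by
    intro k
    simp [faceMap, p, faceEntry_free hd.1]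
  have := congrFun hg p
  rw [Finset.sum_apply, Finset.sum_eq_single ⟨d, hd₀⟩] at this
  · simpa [eval] using this
  · intro k _ hkd
    have hkd' : (k : ℕ) ≠ d := fun h => hkd (Subtype.ext h)
    simp [eval, hkd']
  · simp

theorem finrank_direction_affineSpan_Fface (hlam : ∀ i, 1 ≤ i → i < n → lam (i + 1) < lam i)
    (hr : ∀ j, 1 ≤ j → j ≤ n - 1 → 1 ≤ r j ∧ r j ≤ n - j) :
    Module.finrank ℝ (affineSpan ℝ (Fface n lam r)).direction = n - 1 := by
  have hspan : vectorSpan ℝ (paramPolytope lam r (n - 1)) =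
      Submodule.span ℝ ((fun d => Pi.single d 1) '' Icc 1 (n - 1)) :=
    le_antisymm vectorSpan_paramPolytope_le
      (span_single_le_vectorSpan_paramPolytope hlam hr le_rfl)
  rw [direction_affineSpan, Fface_eq_image_faceMap hlam hr, ← AffineMap.map_vectorSpan, hspan,
    Submodule.map_span, image_image, ← Finset.coe_Icc, image_eq_range]
  exact (finrank_span_eq_card (linearIndependent_faceMap_linear_single hr)).trans (by simp)

theorem ncard_extremePoints_Fface (hlam : ∀ i, 1 ≤ i → i < n → lam (i + 1) < lam i)
    (hr : ∀ j, 1 ≤ j → j ≤ n - 1 → 1 ≤ r j ∧ r j ≤ n - j) :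
    (extremePoints ℝ (Fface n lam r)).ncard = 2 ^ (n - 1) := by
  rw [Fface_eq_image_faceMap hlam hr,
    AffineMap.extremePoints_image_of_injOn _ (convex_paramPolytope _) (faceMap_injOn hr),
    ((faceMap_injOn hr).mono extremePoints_subset).ncard_image,
    ncard_extremePoints_paramPolytope hlam hr le_rfl]

end Face

theorem stmt_13_general (n : ℕ) (lam : ℕ → ℝ)
    (hlam : ∀ i, 1 ≤ i → i < n → lam (i + 1) < lam i) :
    ∀ r ∈ calF n,
      (Fface n lam r).Nonempty ∧
      IsCompact (Fface n lam r) ∧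
      Convex ℝ (Fface n lam r) ∧
      Module.finrank ℝ (affineSpan ℝ (Fface n lam r)).direction = n - 1 ∧
      (Set.extremePoints ℝ (Fface n lam r)).ncard = 2 ^ (n - 1) := by
  rintro r ⟨hr, -⟩
  have hface := Fface_eq_image_faceMap hlam hr
  refine ⟨hface ▸ (paramPolytope_nonempty hlam hr le_rfl).image _,
    isCompact_GZ.of_isClosed_subset (isClosed_Fface r) (sep_subset _ _),
    hface ▸ (convex_paramPolytope _).affine_image _,
    finrank_direction_affineSpan_Fface hlam hr, ncard_extremePoints_Fface hlam hr⟩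

/-- each `F(r)` is a nonempty compact convex polytope whose affine hull has
dimension `n-1` and which has exactly `2^{n-1}` extreme points. -/
theorem stmt_13 (n : ℕ) (hn : 2 ≤ n) (lam : ℕ → ℝ)
    (hlam : ∀ i, 1 ≤ i → i < n → lam (i + 1) < lam i) :
    ∀ r ∈ calF n,
      (Fface n lam r).Nonempty ∧
      IsCompact (Fface n lam r) ∧
      Convex ℝ (Fface n lam r) ∧
      Module.finrank ℝ (affineSpan ℝ (Fface n lam r)).direction = n - 1 ∧
      (Set.extremePoints ℝ (Fface n lam r)).ncard = 2 ^ (n - 1) :=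
  stmt_13_general n lam hlam
end
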